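/- arXiv:2001.00852 — 6 statements merged into one kernel-verified Lean document; each statement's English description precedes it below -/
import Mathlib

section
/- For all real numbers x > 0 and y > 0, one has (x - y) * log(x/y) >= 4 * (sqrt(x) - sqrt(y))^2. -/
/-!
With `a = √x`, `b = √y` and `t = (a - b) / (a + b)` one has `a / b = (1 + t) / (1 - t)`, and the
inequality becomes `t * artanh t ≥ t ^ 2`, where `artanh t = log ((1 + t) / (1 - t)) / 2`. For
`t ≥ 0` this is `artanh t ≥ t`, the first term of the power series of `artanh`; the case `t < 0`
follows since `artanh` is odd.
-/

open Real

theorem two_mul_sq_le_mul_log_one_add_div_one_sub {t : ℝ} (ht : |t| < 1) :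
    2 * t ^ 2 ≤ t * log ((1 + t) / (1 - t)) := by
  have of_nonneg (s : ℝ) (hs0 : 0 ≤ s) (hs1 : s < 1) :
      2 * s ^ 2 ≤ s * log ((1 + s) / (1 - s)) := by
    have h := sum_range_le_log_div hs0 hs1 1
    simp only [Finset.sum_range_one, mul_zero, zero_add, pow_one, Nat.cast_zero, div_one] at h
    nlinarith
  rcases le_total 0 t with h | h
  · exact of_nonneg t h (abs_lt.1 ht).2
  · have := of_nonneg (-t) (by linarith) (by linarith [(abs_lt.1 ht).1])
    rwa [sub_neg_eq_add, ← sub_eq_add_neg, ← inv_div, log_inv, neg_sq, mul_neg, neg_mul,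
      neg_neg] at this

theorem two_mul_sq_sub_le_sq_sub_sq_mul_log_div {a b : ℝ} (ha : 0 < a) (hb : 0 < b) :
    2 * (a - b) ^ 2 ≤ (a ^ 2 - b ^ 2) * log (a / b) := by
  set t := (a - b) / (a + b) with ht
  have hab : 0 < a + b := by positivity
  have habs : |t| < 1 := by
    rw [abs_lt, ht, lt_div_iff₀ hab, div_lt_iff₀ hab]
    constructor <;> linarith
  have hratio : (1 + t) / (1 - t) = a / b := by
    rw [ht, one_add_div hab.ne', one_sub_div hab.ne', div_div_div_cancel_right₀ hab.ne',
      show a + b + (a - b) = 2 * a by ring, show a + b - (a - b) = 2 * b by ring,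
      mul_div_mul_left _ _ two_ne_zero]
  have h := two_mul_sq_le_mul_log_one_add_div_one_sub habs
  rw [hratio] at h
  calc 2 * (a - b) ^ 2 = (a + b) ^ 2 * (2 * t ^ 2) := by rw [ht]; field_simp
    _ ≤ (a + b) ^ 2 * (t * log (a / b)) := by gcongr
    _ = (a ^ 2 - b ^ 2) * log (a / b) := by rw [ht]; field_simp; ring

/-- For all positive reals `x, y`, one has `(x - y) * log (x / y) ≥ 4 * (√x - √y)^2`. -/
theorem sub_mul_log_div_ge_four_sq_sqrt_sub (x y : ℝ) (hx : 0 < x) (hy : 0 < y) :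
    (x - y) * Real.log (x / y) ≥ 4 * (Real.sqrt x - Real.sqrt y) ^ 2 := by
  obtain ⟨a, ha, rfl⟩ : ∃ a, 0 < a ∧ a ^ 2 = x := ⟨√x, sqrt_pos.2 hx, sq_sqrt hx.le⟩
  obtain ⟨b, hb, rfl⟩ : ∃ b, 0 < b ∧ b ^ 2 = y := ⟨√y, sqrt_pos.2 hy, sq_sqrt hy.le⟩
  rw [sqrt_sq ha.le, sqrt_sq hb.le, ← div_pow, log_pow]
  have := two_mul_sq_sub_le_sq_sub_sq_mul_log_div ha hb
  push_cast
  linarith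
end

section
/- There exists a constant C > 0 such that for all real numbers x > 0 and y > 0 with x ≠ y, x * log(x/y) - x + y <= C * max(1, log(x/y)) * (sqrt(x) - sqrt(y))^2. -/
/-!
Dividing by `y` and putting `s = √x / √y` reduces the claim to
`φ(s²) ≤ C · max 1 (log s²) · (s - 1)²` for `φ(t) = t log t - t + 1`.
The tangent-line bound `log s ≤ s - 1` gives `φ(s²) ≤ (2s + 1)(s - 1)²`, which settles `s ≤ 3`;
for `s ≥ 3` we use `φ(t) ≤ (t - 1) log t` and `s + 1 ≤ 2 (s - 1)`.
-/

open Real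

theorem mul_log_sub_add_one_le_sub_one_mul_log {t : ℝ} (ht : 0 < t) :
    t * log t - t + 1 ≤ (t - 1) * log t := by
  linarith [log_le_sub_one_of_pos ht]

theorem sq_mul_log_sq_sub_sq_add_one_le {s : ℝ} (hs : 0 < s) :
    s ^ 2 * log (s ^ 2) - s ^ 2 + 1 ≤ (2 * s + 1) * (s - 1) ^ 2 := by
  have hlog : log s ≤ s - 1 := log_le_sub_one_of_pos hs
  rw [log_pow, Nat.cast_ofNat]
  nlinarith [mul_le_mul_of_nonneg_left hlog (sq_nonneg s)]

theorem sq_mul_log_sq_sub_sq_add_one_le_max {s : ℝ} (hs : 0 < s) :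
    s ^ 2 * log (s ^ 2) - s ^ 2 + 1 ≤ 7 * max 1 (log (s ^ 2)) * (s - 1) ^ 2 := by
  rcases le_or_gt s 3 with hs3 | hs3
  · calc s ^ 2 * log (s ^ 2) - s ^ 2 + 1
        ≤ (2 * s + 1) * (s - 1) ^ 2 := sq_mul_log_sq_sub_sq_add_one_le hs
      _ ≤ 7 * 1 * (s - 1) ^ 2 := by gcongr; linarith
      _ ≤ 7 * max 1 (log (s ^ 2)) * (s - 1) ^ 2 := by gcongr; exact le_max_left _ _
  · have hlog : 0 ≤ log (s ^ 2) := log_nonneg (by nlinarith)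
    calc s ^ 2 * log (s ^ 2) - s ^ 2 + 1
        ≤ (s ^ 2 - 1) * log (s ^ 2) := mul_log_sub_add_one_le_sub_one_mul_log (by positivity)
      _ = (s + 1) * (s - 1) * log (s ^ 2) := by ring
      _ ≤ 2 * (s - 1) * (s - 1) * log (s ^ 2) := by gcongr <;> linarith
      _ ≤ 7 * log (s ^ 2) * (s - 1) ^ 2 := by nlinarith [sq_nonneg (s - 1)]
      _ ≤ 7 * max 1 (log (s ^ 2)) * (s - 1) ^ 2 := by gcongr; exact le_max_right _ _

/-- There is a constant `C > 0` such that for all positive reals `x ≠ y`,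
`x * log (x / y) - x + y ≤ C * max 1 (log (x / y)) * (√x - √y)^2`. -/
theorem entropy_integrand_bound :
    ∃ C : ℝ, 0 < C ∧ ∀ x y : ℝ, 0 < x → 0 < y → x ≠ y →
      x * Real.log (x / y) - x + y ≤
        C * max 1 (Real.log (x / y)) * (Real.sqrt x - Real.sqrt y) ^ 2 := by
  refine ⟨7, by norm_num, fun x y hx hy _ => ?_⟩
  have hsy : 0 < √y := sqrt_pos.mpr hy
  have hsq : (√x / √y) ^ 2 = x / y := by rw [div_pow, sq_sqrt hx.le, sq_sqrt hy.le]
  have key := sq_mul_log_sq_sub_sq_add_one_le_max (div_pos (sqrt_pos.mpr hx) hsy)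
  rw [hsq] at key
  calc x * log (x / y) - x + y = y * (x / y * log (x / y) - x / y + 1) := by
        field_simp
    _ ≤ y * (7 * max 1 (log (x / y)) * (√x / √y - 1) ^ 2) := by gcongr
    _ = 7 * max 1 (log (x / y)) * (√x - √y) ^ 2 := by
        rw [div_sub_one hsy.ne', div_pow, sq_sqrt hy.le]
        field_simp
end

section
/- Let N >= 3, let Omega ⊂ R^N be a nonempty bounded open set, let d1, d2, d3 > 0 and M13, M23, M14 > 0, and assume there is a constant C_Omega > 0 such that for every continuously differentiable function f : R^N → R one has ||∇f||_{L^2(Omega)} >= C_Omega * ||f - f̄||_{L^{2N/(N-2)}(Omega)}, where f̄ = (1/|Omega|)∫_Omega f dx. Then there exists a constant K2 > 0, depending only on Omega, C_Omega, d1, d2, d3, M13, M23, M14, such that: for all bounded nonnegative measurable functions u1, u2, u3, u4 on Omega with U_i := sqrt(u_i) continuously differentiable for i = 1, 2, 3, satisfying the mass constraints ∫_Omega (u_i + u_j) dx = M_{ij} for (i,j) in {(1,3),(2,3),(1,4)}, one has D~(U) >= K2 / (1 + max( ||u1||_{L^{N/2}(Omega)}, ||u4||_{L^{N/2}(Omega)}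 )) * ||U4 - Ū4||_{L^2(Omega)}^2. -/
/-!
Write `Uᵢ = √uᵢ` and `Ūᵢ` for the mean of `Uᵢ` over `Ω`. The reaction term transfers diffusion
to the non-diffusive species through the identity
`Ū₃ U₄ - Ū₁ Ū₂ = (Ū₃ - U₃) U₄ + Ū₂ (U₁ - Ū₁) + U₁ (U₂ - Ū₂) - (U₁U₂ - U₃U₄)`.
The Sobolev inequality followed by Hölder against `U₄² = u₄`, `U₁² = u₁` or `1` (exponents
`N/(N-2)` and `N/2`) bounds the first three terms by the dissipation times
`1 + max(‖u₁‖_{N/2}, ‖u₄‖_{N/2})`, and the last one is part of the dissipation, so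
`Ū₃² ‖U₄ - Ū₄‖₂² ≲ D~(U) (1 + max(‖u₁‖_{N/2}, ‖u₄‖_{N/2}))`.

It remains to bound `Ū₃` from below when the dissipation is small. Then each `Uᵢ`, `i ≤ 3`, is
close to its mean in `L²`; if moreover `∫ u₃` were small, the masses would make `Ū₁` and `Ū₂`
large, hence `∫ U₁U₂` large, whereas `∫ U₁U₂ ≤ ‖U₁U₂ - U₃U₄‖₁ + ‖U₃‖₂ ‖U₄‖₂` is small.
When the dissipation is not small, `‖U₄ - Ū₄‖₂² ≤ ∫ u₄ ≤ M₁₄` suffices.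
-/

open MeasureTheory Real

theorem sq_add_add_sub_le (a b c d : ℝ) :
    (a + b + c - d) ^ 2 ≤ 4 * (a ^ 2 + b ^ 2 + c ^ 2 + d ^ 2) := by
  nlinarith [sq_nonneg (a - b), sq_nonneg (a - c), sq_nonneg (a + d), sq_nonneg (b - c),
    sq_nonneg (b + d), sq_nonneg (c + d)]

theorem sq_mul_sub_mul_le (u₁ u₂ u₃ u₄ m₁ m₂ m₃ : ℝ) :
    (m₃ * u₄ - m₁ * m₂) ^ 2 ≤ 4 * ((u₃ - m₃) ^ 2 * u₄ ^ 2 + m₂ ^ 2 * (u₁ - m₁) ^ 2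
      + (u₂ - m₂) ^ 2 * u₁ ^ 2 + (u₁ * u₂ - u₃ * u₄) ^ 2) := by
  convert sq_add_add_sub_le ((m₃ - u₃) * u₄) (m₂ * (u₁ - m₁)) (u₁ * (u₂ - m₂))
    (u₁ * u₂ - u₃ * u₄) using 1 <;> ring

theorem sqrt_mul_sqrt_le {a b c : ℝ} (hc : 0 ≤ c) (ha : 0 ≤ a) (h : a * b ≤ c ^ 2) :
    √a * √b ≤ c := by
  rw [← Real.sqrt_mul ha, Real.sqrt_le_left hc]
  exact h

theorem Real.holderConjugate_div_sub_two {N : ℝ} (hN : 2 < N) :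
    (N / (N - 2)).HolderConjugate (N / 2) := by
  rw [Real.holderConjugate_iff, one_lt_div (by linarith), inv_div, inv_div]
  exact ⟨by linarith, by field_simp; ring⟩

section

variable {X : Type*} [MeasurableSpace X] {μ : Measure X} {f g : X → ℝ}

theorem MeasureTheory.MemLp.sq_of_top (hf : MemLp f ⊤ μ) : MemLp (fun x => f x ^ 2) ⊤ μ := by
  simpa only [sq] using hf.mul' hf

theorem average_nonneg_of_ae (hf : 0 ≤ᵐ[μ] f) : 0 ≤ ⨍ x, f x ∂μ := by
  rw [average_eq, smul_eq_mul]
  exact mul_nonneg (by positivity) (integral_nonneg_of_ae hf)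

theorem integral_mul_le_sqrt_mul_sqrt (hf : MemLp f 2 μ) (hg : MemLp g 2 μ) :
    ∫ x, f x * g x ∂μ ≤ √(∫ x, f x ^ 2 ∂μ) * √(∫ x, g x ^ 2 ∂μ) := by
  have h := integral_mul_norm_le_Lp_mul_Lq (μ := μ) Real.HolderConjugate.two_two
    (by simpa using hf) (by simpa using hg)
  simp only [Real.norm_eq_abs, Real.rpow_two, sq_abs, ← Real.sqrt_eq_rpow] at h
  calc ∫ x, f x * g x ∂μ ≤ ‖∫ x, f x * g x ∂μ‖ := le_abs_self _
    _ ≤ ∫ x, |f x| * |g x| ∂μ :=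
        (norm_integral_le_integral_norm _).trans_eq (by simp only [norm_mul, Real.norm_eq_abs])
    _ ≤ _ := h

theorem integral_sq_mul_le_Lp_mul_Lq {p q : ℝ} (hpq : p.HolderConjugate q)
    (hf : MemLp (fun x => f x ^ 2) (ENNReal.ofReal p) μ) (hg : MemLp g (ENNReal.ofReal q) μ) :
    ∫ x, f x ^ 2 * g x ∂μ
      ≤ (∫ x, |f x| ^ (2 * p) ∂μ) ^ (1 / p) * (∫ x, |g x| ^ q ∂μ) ^ (1 / q) := by
  have habs : ∀ x, |f x ^ 2| ^ p = |f x| ^ (2 * p) := fun x => by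
    rw [abs_pow, Real.rpow_mul (abs_nonneg _), Real.rpow_two]
  have h := integral_mul_norm_le_Lp_mul_Lq hpq hf hg
  simp only [Real.norm_eq_abs, habs] at h
  calc ∫ x, f x ^ 2 * g x ∂μ ≤ ‖∫ x, f x ^ 2 * g x ∂μ‖ := le_abs_self _
    _ ≤ ∫ x, |f x ^ 2| * |g x| ∂μ :=
        (norm_integral_le_integral_norm _).trans_eq (by simp only [norm_mul, Real.norm_eq_abs])
    _ ≤ _ := h

theorem sq_mul_rpow_le_of_mul_rpow_le_rpow_half {N C : ℝ} (hN : 2 < N) (hC : 0 ≤ C)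
    {h : X → ℝ} (hsob : C * (∫ x, |f x| ^ (2 * N / (N - 2)) ∂μ) ^ ((N - 2) / (2 * N))
      ≤ (∫ x, h x ^ 2 ∂μ) ^ ((1 : ℝ) / 2)) :
    C ^ 2 * (∫ x, |f x| ^ (2 * (N / (N - 2))) ∂μ) ^ (1 / (N / (N - 2))) ≤ ∫ x, h x ^ 2 ∂μ := by
  have hS : 0 ≤ ∫ x, |f x| ^ (2 * N / (N - 2)) ∂μ := by positivity
  rw [← Real.sqrt_eq_rpow, Real.le_sqrt (by positivity) (integral_nonneg fun x => sq_nonneg _),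
    mul_pow, ← Real.rpow_mul_natCast hS] at hsob
  rw [← mul_div_assoc]
  convert hsob using 3
  field_simp
  ring

end

section

variable {X : Type*} [MeasurableSpace X] {μ : Measure X} [IsFiniteMeasure μ] {f g : X → ℝ}

theorem integral_add_const (hg : Integrable g μ) (c : ℝ) :
    ∫ x, (g x + c) ∂μ = ∫ x, g x ∂μ + μ.real Set.univ * c := by
  rw [integral_add hg (integrable_const c), integral_const, smul_eq_mul]

theorem integral_sub_mul_sub (hf : MemLp f 2 μ) (hg : MemLp g 2 μ) (a b : ℝ) :
    ∫ x, (f x - a) * (g x - b) ∂μ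
      = ∫ x, f x * g x ∂μ - b * ∫ x, f x ∂μ - a * ∫ x, g x ∂μ + a * b * μ.real Set.univ := by
  have hf₁ : Integrable f μ := hf.integrable one_le_two
  have hg₁ : Integrable g μ := hg.integrable one_le_two
  have hfg : Integrable (fun x => f x * g x) μ := hf.integrable_mul hg
  have hfg₁ : Integrable (fun x => f x * g x - b * f x) μ := hfg.sub (hf₁.const_mul b)
  have hfg₂ : Integrable (fun x => f x * g x - b * f x - a * g x) μ := hfg₁.sub (hg₁.const_mul a)
  simp_rw [show ∀ x, (f x - a) * (g x - b) = f x * g x - b * f x - a * g x + a * b from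
    fun x => by ring]
  rw [integral_add hfg₂ (integrable_const _), integral_sub hfg₁ (hg₁.const_mul a),
    integral_sub hfg (hf₁.const_mul b), integral_const_mul, integral_const_mul,
    integral_const, smul_eq_mul]
  ring

theorem integral_sub_average_mul_sub_average (hf : MemLp f 2 μ) (hg : MemLp g 2 μ) :
    ∫ x, (f x - ⨍ y, f y ∂μ) * (g x - ⨍ y, g y ∂μ) ∂μ
      = ∫ x, f x * g x ∂μ - μ.real Set.univ * (⨍ y, f y ∂μ) * ⨍ y, g y ∂μ := by
  rw [integral_sub_mul_sub hf hg, ← measure_smul_average μ f, ← measure_smul_average μ g,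
    smul_eq_mul, smul_eq_mul]
  ring

theorem integral_sub_average_sq (hf : MemLp f 2 μ) :
    ∫ x, (f x - ⨍ y, f y ∂μ) ^ 2 ∂μ = ∫ x, f x ^ 2 ∂μ - μ.real Set.univ * (⨍ y, f y ∂μ) ^ 2 := by
  simpa only [sq, mul_assoc] using integral_sub_average_mul_sub_average hf hf

theorem integral_sub_average_sq_le (hf : MemLp f 2 μ) (c : ℝ) :
    ∫ x, (f x - ⨍ y, f y ∂μ) ^ 2 ∂μ ≤ ∫ x, (f x - c) ^ 2 ∂μ := by
  simp only [sq]
  rw [integral_sub_mul_sub hf hf, integral_sub_mul_sub hf hf, ← measure_smul_average μ f,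
    smul_eq_mul]
  nlinarith [mul_nonneg (measureReal_nonneg (μ := μ) (s := Set.univ)) (sq_nonneg (⨍ y, f y ∂μ - c))]

theorem sq_mul_integral_sub_average_sq_le (hf : MemLp f 2 μ) (c d : ℝ) :
    c ^ 2 * ∫ x, (f x - ⨍ y, f y ∂μ) ^ 2 ∂μ ≤ ∫ x, (c * f x - d) ^ 2 ∂μ := by
  rcases eq_or_ne c 0 with rfl | hc
  · rw [zero_pow two_ne_zero, zero_mul]
    positivity
  calc c ^ 2 * ∫ x, (f x - ⨍ y, f y ∂μ) ^ 2 ∂μ ≤ c ^ 2 * ∫ x, (f x - d / c) ^ 2 ∂μ :=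
        mul_le_mul_of_nonneg_left (integral_sub_average_sq_le hf _) (sq_nonneg c)
    _ = ∫ x, (c * f x - d) ^ 2 ∂μ := by
        rw [← integral_const_mul]
        congr 1 with x
        field_simp

theorem integral_le_sqrt_mul_sqrt_measureReal (hf : MemLp f 2 μ) :
    ∫ x, f x ∂μ ≤ √(∫ x, f x ^ 2 ∂μ) * √(μ.real Set.univ) := by
  simpa using integral_mul_le_sqrt_mul_sqrt hf (memLp_const (μ := μ) (1 : ℝ))

theorem measureReal_mul_average_mul_average_sub_le (hf : MemLp f 2 μ) (hg : MemLp g 2 μ) :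
    μ.real Set.univ * (⨍ x, f x ∂μ) * (⨍ x, g x ∂μ)
        - √(∫ x, (f x - ⨍ y, f y ∂μ) ^ 2 ∂μ) * √(∫ x, (g x - ⨍ y, g y ∂μ) ^ 2 ∂μ)
      ≤ ∫ x, f x * g x ∂μ := by
  have h := integral_mul_le_sqrt_mul_sqrt ((hf.sub (memLp_const (⨍ y, f y ∂μ))).neg)
    (hg.sub (memLp_const (⨍ y, g y ∂μ)))
  simp only [Pi.neg_apply, Pi.sub_apply, neg_sq, neg_mul, integral_neg] at h
  rw [integral_sub_average_mul_sub_average hf hg] at h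
  linarith

theorem integral_sq_le_rpow_mul_measureReal_rpow {p q : ℝ} (hpq : p.HolderConjugate q)
    (hf : MemLp (fun x => f x ^ 2) (ENNReal.ofReal p) μ) :
    ∫ x, f x ^ 2 ∂μ ≤ (∫ x, |f x| ^ (2 * p) ∂μ) ^ (1 / p) * μ.real Set.univ ^ (1 / q) := by
  simpa [Real.one_rpow] using integral_sq_mul_le_Lp_mul_Lq hpq hf (memLp_const (μ := μ) (1 : ℝ))

end

section

variable {X : Type*} [MeasurableSpace X] {μ : Measure X} [IsFiniteMeasure μ]
  {U₁ U₂ U₃ U₄ : X → ℝ} {p q : ℝ}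

theorem sq_average_mul_integral_sub_average_sq_le (h₁ : MemLp U₁ ⊤ μ) (h₂ : MemLp U₂ ⊤ μ)
    (h₃ : MemLp U₃ ⊤ μ) (h₄ : MemLp U₄ ⊤ μ) :
    (⨍ x, U₃ x ∂μ) ^ 2 * ∫ x, (U₄ x - ⨍ y, U₄ y ∂μ) ^ 2 ∂μ
      ≤ 4 * (∫ x, (U₃ x - ⨍ y, U₃ y ∂μ) ^ 2 * U₄ x ^ 2 ∂μ
          + (⨍ y, U₂ y ∂μ) ^ 2 * ∫ x, (U₁ x - ⨍ y, U₁ y ∂μ) ^ 2 ∂μ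
          + ∫ x, (U₂ x - ⨍ y, U₂ y ∂μ) ^ 2 * U₁ x ^ 2 ∂μ
          + ∫ x, (U₁ x * U₂ x - U₃ x * U₄ x) ^ 2 ∂μ) := by
  set m₁ := ⨍ y, U₁ y ∂μ
  set m₂ := ⨍ y, U₂ y ∂μ
  set m₃ := ⨍ y, U₃ y ∂μ
  have hT₁ : Integrable (fun x => (U₃ x - m₃) ^ 2 * U₄ x ^ 2) μ :=
    (h₄.sq_of_top.mul' (h₃.sub (memLp_const m₃)).sq_of_top).integrable le_top
  have hT₂ : Integrable (fun x => m₂ ^ 2 * (U₁ x - m₁) ^ 2) μ :=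
    ((h₁.sub (memLp_const m₁)).sq_of_top.integrable le_top).const_mul _
  have hT₃ : Integrable (fun x => (U₂ x - m₂) ^ 2 * U₁ x ^ 2) μ :=
    (h₁.sq_of_top.mul' (h₂.sub (memLp_const m₂)).sq_of_top).integrable le_top
  have hT₄ : Integrable (fun x => (U₁ x * U₂ x - U₃ x * U₄ x) ^ 2) μ :=
    ((h₂.mul' h₁).sub (h₄.mul' h₃)).sq_of_top.integrable le_top
  have hT₁₂ : Integrable (fun x => (U₃ x - m₃) ^ 2 * U₄ x ^ 2 + m₂ ^ 2 * (U₁ x - m₁) ^ 2) μ :=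
    hT₁.add hT₂
  have hT₁₂₃ : Integrable (fun x => (U₃ x - m₃) ^ 2 * U₄ x ^ 2 + m₂ ^ 2 * (U₁ x - m₁) ^ 2
      + (U₂ x - m₂) ^ 2 * U₁ x ^ 2) μ := hT₁₂.add hT₃
  calc m₃ ^ 2 * ∫ x, (U₄ x - ⨍ y, U₄ y ∂μ) ^ 2 ∂μ ≤ ∫ x, (m₃ * U₄ x - m₁ * m₂) ^ 2 ∂μ :=
        sq_mul_integral_sub_average_sq_le (h₄.mono_exponent le_top) _ _
    _ ≤ ∫ x, 4 * ((U₃ x - m₃) ^ 2 * U₄ x ^ 2 + m₂ ^ 2 * (U₁ x - m₁) ^ 2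
          + (U₂ x - m₂) ^ 2 * U₁ x ^ 2 + (U₁ x * U₂ x - U₃ x * U₄ x) ^ 2) ∂μ :=
        integral_mono_of_nonneg (ae_of_all _ fun x => sq_nonneg _)
          ((hT₁₂₃.add hT₄).const_mul 4) (ae_of_all _ fun x => sq_mul_sub_mul_le _ _ _ _ _ _ _)
    _ = _ := by
        rw [integral_const_mul, integral_add hT₁₂₃ hT₄, integral_add hT₁₂ hT₃,
          integral_add hT₁ hT₂, integral_const_mul]

theorem sq_average_mul_integral_sub_average_sq_le_of_rpow_le (hpq : p.HolderConjugate q)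
    (h₁ : MemLp U₁ ⊤ μ) (h₂ : MemLp U₂ ⊤ μ) (h₃ : MemLp U₃ ⊤ μ) (h₄ : MemLp U₄ ⊤ μ) {σ C : ℝ}
    (hS₁ : (∫ x, |U₁ x - ⨍ y, U₁ y ∂μ| ^ (2 * p) ∂μ) ^ (1 / p) ≤ σ)
    (hS₂ : (∫ x, |U₂ x - ⨍ y, U₂ y ∂μ| ^ (2 * p) ∂μ) ^ (1 / p) ≤ σ)
    (hS₃ : (∫ x, |U₃ x - ⨍ y, U₃ y ∂μ| ^ (2 * p) ∂μ) ^ (1 / p) ≤ σ)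
    (hδ : ∫ x, (U₁ x * U₂ x - U₃ x * U₄ x) ^ 2 ∂μ ≤ C * σ) :
    (⨍ x, U₃ x ∂μ) ^ 2 * ∫ x, (U₄ x - ⨍ y, U₄ y ∂μ) ^ 2 ∂μ
      ≤ 4 * σ * ((∫ x, |U₁ x ^ 2| ^ q ∂μ) ^ (1 / q) + (∫ x, |U₄ x ^ 2| ^ q ∂μ) ^ (1 / q)
          + (⨍ x, U₂ x ∂μ) ^ 2 * μ.real Set.univ ^ (1 / q) + C) := by
  have hLp : ∀ {f : X → ℝ}, MemLp f ⊤ μ → ∀ r : ℝ, MemLp f (ENNReal.ofReal r) μ :=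
    fun hf _ => hf.mono_exponent le_top
  have hdev : ∀ {f : X → ℝ}, MemLp f ⊤ μ → ∀ r : ℝ,
      MemLp (fun x => (f x - ⨍ y, f y ∂μ) ^ 2) (ENNReal.ofReal r) μ :=
    fun hf r => hLp (hf.sub (memLp_const _)).sq_of_top r
  have hA₁ : 0 ≤ (∫ x, |U₁ x ^ 2| ^ q ∂μ) ^ (1 / q) := by positivity
  have hA₄ : 0 ≤ (∫ x, |U₄ x ^ 2| ^ q ∂μ) ^ (1 / q) := by positivity
  have hT₁ := (integral_sq_mul_le_Lp_mul_Lq hpq (hdev h₃ p) (hLp h₄.sq_of_top q)).trans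
    (mul_le_mul_of_nonneg_right hS₃ hA₄)
  have hT₂ := mul_le_mul_of_nonneg_left
    ((integral_sq_le_rpow_mul_measureReal_rpow hpq (hdev h₁ p)).trans
      (mul_le_mul_of_nonneg_right hS₁ (by positivity))) (sq_nonneg (⨍ x, U₂ x ∂μ))
  have hT₃ := (integral_sq_mul_le_Lp_mul_Lq hpq (hdev h₂ p) (hLp h₁.sq_of_top q)).trans
    (mul_le_mul_of_nonneg_right hS₂ hA₁)
  have := sq_average_mul_integral_sub_average_sq_le h₁ h₂ h₃ h₄
  linarith

theorem integral_mul_le_sqrt_sub_sq_add_sqrt_mul_sqrt (h₁ : MemLp U₁ ⊤ μ) (h₂ : MemLp U₂ ⊤ μ)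
    (h₃ : MemLp U₃ ⊤ μ) (h₄ : MemLp U₄ ⊤ μ) :
    ∫ x, U₁ x * U₂ x ∂μ
      ≤ √(∫ x, (U₁ x * U₂ x - U₃ x * U₄ x) ^ 2 ∂μ) * √(μ.real Set.univ)
        + √(∫ x, U₃ x ^ 2 ∂μ) * √(∫ x, U₄ x ^ 2 ∂μ) := by
  have hδ : MemLp (fun x => U₁ x * U₂ x - U₃ x * U₄ x) ⊤ μ := (h₂.mul' h₁).sub (h₄.mul' h₃)
  have hsplit : ∫ x, U₁ x * U₂ x ∂μ
      = ∫ x, (U₁ x * U₂ x - U₃ x * U₄ x) ∂μ + ∫ x, U₃ x * U₄ x ∂μ := by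
    rw [← integral_add (hδ.integrable le_top) ((h₄.mul' h₃).integrable le_top)]
    simp only [sub_add_cancel]
  rw [hsplit]
  exact add_le_add (integral_le_sqrt_mul_sqrt_measureReal (hδ.mono_exponent le_top))
    (integral_mul_le_sqrt_mul_sqrt (h₃.mono_exponent le_top) (h₄.mono_exponent le_top))

theorem le_two_mul_measureReal_mul_sq_average (h₁ : MemLp U₁ ⊤ μ) (h₂ : MemLp U₂ ⊤ μ)
    (h₃ : MemLp U₃ ⊤ μ) (h₄ : MemLp U₄ ⊤ μ) (h₁₀ : 0 ≤ᵐ[μ] U₁) (h₂₀ : 0 ≤ᵐ[μ] U₂)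
    {M₁₃ M₂₃ M₁₄ ε η κ : ℝ}
    (hM₁₃ : ∫ x, U₁ x ^ 2 ∂μ + ∫ x, U₃ x ^ 2 ∂μ = M₁₃)
    (hM₂₃ : ∫ x, U₂ x ^ 2 ∂μ + ∫ x, U₃ x ^ 2 ∂μ = M₂₃)
    (hM₁₄ : ∫ x, U₁ x ^ 2 ∂μ + ∫ x, U₄ x ^ 2 ∂μ = M₁₄)
    (hvar₁ : ∫ x, (U₁ x - ⨍ y, U₁ y ∂μ) ^ 2 ∂μ ≤ η)
    (hvar₂ : ∫ x, (U₂ x - ⨍ y, U₂ y ∂μ) ^ 2 ∂μ ≤ η)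
    (hvar₃ : ∫ x, (U₃ x - ⨍ y, U₃ y ∂μ) ^ 2 ∂μ ≤ η)
    (hδ : ∫ x, (U₁ x * U₂ x - U₃ x * U₄ x) ^ 2 ∂μ ≤ κ)
    (hε₁₃ : 4 * ε ≤ M₁₃) (hε₂₃ : 4 * ε ≤ M₂₃) (hε₁₄ : 64 * (ε * M₁₄) ≤ M₁₃ * M₂₃)
    (hηε : 2 * η ≤ ε) (hη : 8 * η ≤ √(M₁₃ * M₂₃))
    (hκ : 64 * (κ * μ.real Set.univ) ≤ M₁₃ * M₂₃) :
    ε ≤ 2 * (μ.real Set.univ * (⨍ x, U₃ x ∂μ) ^ 2) := by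
  suffices ε ≤ ∫ x, U₃ x ^ 2 ∂μ by
    linarith [integral_sub_average_sq (h₃.mono_exponent (p := 2) le_top)]
  by_contra! hsmall
  set V := μ.real Set.univ
  set m₁ := ⨍ y, U₁ y ∂μ
  set m₂ := ⨍ y, U₂ y ∂μ
  set R := √(M₁₃ * M₂₃)
  have hs₃ : 0 ≤ ∫ x, U₃ x ^ 2 ∂μ := integral_nonneg fun x => sq_nonneg _
  have hs₄ : 0 ≤ ∫ x, U₄ x ^ 2 ∂μ := integral_nonneg fun x => sq_nonneg _
  have hv₁ : 0 ≤ ∫ x, (U₁ x - m₁) ^ 2 ∂μ := integral_nonneg fun x => sq_nonneg _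
  have hM : 0 < M₁₃ * M₂₃ := mul_pos (by linarith) (by linarith)
  have hR : R ^ 2 = M₁₃ * M₂₃ := Real.sq_sqrt hM.le
  have hVm₁ : M₁₃ ≤ 2 * (V * m₁ ^ 2) := by
    linarith [integral_sub_average_sq (h₁.mono_exponent (p := 2) le_top)]
  have hVm₂ : M₂₃ ≤ 2 * (V * m₂ ^ 2) := by
    linarith [integral_sub_average_sq (h₂.mono_exponent (p := 2) le_top)]
  have hmeans : R ≤ 2 * (V * m₁ * m₂) := by
    have := mul_le_mul hVm₁ hVm₂ (by linarith) (by positivity)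
    rw [Real.sqrt_le_left (by positivity [average_nonneg_of_ae h₁₀, average_nonneg_of_ae h₂₀])]
    nlinarith
  have hcov : √(∫ x, (U₁ x - m₁) ^ 2 ∂μ) * √(∫ x, (U₂ x - m₂) ^ 2 ∂μ) ≤ η :=
    sqrt_mul_sqrt_le (by linarith) hv₁ (by nlinarith)
  have hreact : √(∫ x, (U₁ x * U₂ x - U₃ x * U₄ x) ^ 2 ∂μ) * √V ≤ R / 8 := by
    refine sqrt_mul_sqrt_le (by positivity) (integral_nonneg fun x => sq_nonneg _) ?_
    nlinarith [mul_le_mul_of_nonneg_right hδ (measureReal_nonneg (μ := μ) (s := Set.univ))]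
  have hU₃U₄ : √(∫ x, U₃ x ^ 2 ∂μ) * √(∫ x, U₄ x ^ 2 ∂μ) ≤ R / 8 := by
    refine sqrt_mul_sqrt_le (by positivity) hs₃ ?_
    nlinarith [mul_le_mul hsmall.le (show ∫ x, U₄ x ^ 2 ∂μ ≤ M₁₄ by linarith) hs₄ (by linarith)]
  have := measureReal_mul_average_mul_average_sub_le (h₁.mono_exponent (p := 2) le_top)
    (h₂.mono_exponent (p := 2) le_top)
  have := integral_mul_le_sqrt_sub_sq_add_sqrt_mul_sqrt h₁ h₂ h₃ h₄
  linarith [Real.sqrt_pos.2 hM]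

theorem mul_integral_sub_average_sq_le_of_rpow_le (hpq : p.HolderConjugate q)
    (h₁ : MemLp U₁ ⊤ μ) (h₂ : MemLp U₂ ⊤ μ) (h₃ : MemLp U₃ ⊤ μ) (h₄ : MemLp U₄ ⊤ μ)
    (h₁₀ : 0 ≤ᵐ[μ] U₁) (h₂₀ : 0 ≤ᵐ[μ] U₂) {M₁₃ M₂₃ M₁₄ ε σ C : ℝ}
    (hM₁₃ : ∫ x, U₁ x ^ 2 ∂μ + ∫ x, U₃ x ^ 2 ∂μ = M₁₃)
    (hM₂₃ : ∫ x, U₂ x ^ 2 ∂μ + ∫ x, U₃ x ^ 2 ∂μ = M₂₃)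
    (hM₁₄ : ∫ x, U₁ x ^ 2 ∂μ + ∫ x, U₄ x ^ 2 ∂μ = M₁₄)
    (hS₁ : (∫ x, |U₁ x - ⨍ y, U₁ y ∂μ| ^ (2 * p) ∂μ) ^ (1 / p) ≤ σ)
    (hS₂ : (∫ x, |U₂ x - ⨍ y, U₂ y ∂μ| ^ (2 * p) ∂μ) ^ (1 / p) ≤ σ)
    (hS₃ : (∫ x, |U₃ x - ⨍ y, U₃ y ∂μ| ^ (2 * p) ∂μ) ^ (1 / p) ≤ σ)
    (hδ : ∫ x, (U₁ x * U₂ x - U₃ x * U₄ x) ^ 2 ∂μ ≤ C * σ)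
    (hε₁₃ : 4 * ε ≤ M₁₃) (hε₂₃ : 4 * ε ≤ M₂₃) (hε₁₄ : 64 * (ε * M₁₄) ≤ M₁₃ * M₂₃)
    (hσε : 2 * (μ.real Set.univ ^ (1 / q) * σ) ≤ ε)
    (hσR : 8 * (μ.real Set.univ ^ (1 / q) * σ) ≤ √(M₁₃ * M₂₃))
    (hσC : 64 * (C * σ * μ.real Set.univ) ≤ M₁₃ * M₂₃) :
    ε * ∫ x, (U₄ x - ⨍ y, U₄ y ∂μ) ^ 2 ∂μ
      ≤ 8 * σ * (μ.real Set.univ * ((∫ x, |U₁ x ^ 2| ^ q ∂μ) ^ (1 / q)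
          + (∫ x, |U₄ x ^ 2| ^ q ∂μ) ^ (1 / q) + C) + M₂₃ * μ.real Set.univ ^ (1 / q)) := by
  set V := μ.real Set.univ
  set W := V ^ (1 / q)
  have hσ : 0 ≤ σ := le_trans (by positivity) hS₁
  have hvar : ∀ {f : X → ℝ}, MemLp f ⊤ μ →
      (∫ x, |f x - ⨍ y, f y ∂μ| ^ (2 * p) ∂μ) ^ (1 / p) ≤ σ →
      ∫ x, (f x - ⨍ y, f y ∂μ) ^ 2 ∂μ ≤ W * σ := fun hf hS =>
    (integral_sq_le_rpow_mul_measureReal_rpow hpq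
      (((hf.sub (memLp_const _)).sq_of_top).mono_exponent le_top)).trans
      (by rw [mul_comm W]; exact mul_le_mul_of_nonneg_right hS (by positivity))
  have hm₃ := le_two_mul_measureReal_mul_sq_average h₁ h₂ h₃ h₄ h₁₀ h₂₀ hM₁₃ hM₂₃ hM₁₄
    (hvar h₁ hS₁) (hvar h₂ hS₂) (hvar h₃ hS₃) hδ hε₁₃ hε₂₃ hε₁₄ hσε hσR hσC
  have hm₂ : V * (⨍ x, U₂ x ∂μ) ^ 2 ≤ M₂₃ := by
    have hv₂ : 0 ≤ ∫ x, (U₂ x - ⨍ y, U₂ y ∂μ) ^ 2 ∂μ := integral_nonneg fun x => sq_nonneg _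
    have hs₃ : 0 ≤ ∫ x, U₃ x ^ 2 ∂μ := integral_nonneg fun x => sq_nonneg _
    linarith [integral_sub_average_sq (h₂.mono_exponent (p := 2) le_top)]
  have hvar₄ : 0 ≤ ∫ x, (U₄ x - ⨍ y, U₄ y ∂μ) ^ 2 ∂μ := integral_nonneg fun x => sq_nonneg _
  calc ε * ∫ x, (U₄ x - ⨍ y, U₄ y ∂μ) ^ 2 ∂μ
      ≤ 2 * V * ((⨍ x, U₃ x ∂μ) ^ 2 * ∫ x, (U₄ x - ⨍ y, U₄ y ∂μ) ^ 2 ∂μ) :=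
        (mul_le_mul_of_nonneg_right hm₃ hvar₄).trans_eq (by ring)
    _ ≤ 2 * V * (4 * σ * ((∫ x, |U₁ x ^ 2| ^ q ∂μ) ^ (1 / q) + (∫ x, |U₄ x ^ 2| ^ q ∂μ) ^ (1 / q)
          + (⨍ x, U₂ x ∂μ) ^ 2 * W + C)) :=
        mul_le_mul_of_nonneg_left (sq_average_mul_integral_sub_average_sq_le_of_rpow_le hpq
          h₁ h₂ h₃ h₄ hS₁ hS₂ hS₃ hδ) (by positivity)
    _ = 8 * σ * (V * ((∫ x, |U₁ x ^ 2| ^ q ∂μ) ^ (1 / q) + (∫ x, |U₄ x ^ 2| ^ q ∂μ) ^ (1 / q)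
          + C) + V * (⨍ x, U₂ x ∂μ) ^ 2 * W) := by ring
    _ ≤ _ := by gcongr

-- Constants admissible in `le_two_mul_measureReal_mul_sq_average` with `η = W σ₀`, `κ = C σ₀`,
-- where `W = μ(X) ^ (1 / q)` is the Poincaré factor.
theorem exists_pos_thresholds {M₁₃ M₂₃ M₁₄ C V W : ℝ} (hM₁₃ : 0 < M₁₃) (hM₂₃ : 0 < M₂₃)
    (hM₁₄ : 0 < M₁₄) (hC : 0 < C) (hV : 0 < V) (hW : 0 < W) :
    ∃ ε > 0, ∃ σ₀ > 0, 4 * ε ≤ M₁₃ ∧ 4 * ε ≤ M₂₃ ∧ 64 * (ε * M₁₄) ≤ M₁₃ * M₂₃ ∧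
      2 * (W * σ₀) ≤ ε ∧ 8 * (W * σ₀) ≤ √(M₁₃ * M₂₃) ∧ 64 * (C * σ₀ * V) ≤ M₁₃ * M₂₃ := by
  set ε := min (M₁₃ / 4) (min (M₂₃ / 4) (M₁₃ * M₂₃ / (64 * M₁₄)))
  have hε : 0 < ε := by positivity
  have hR : 0 < √(M₁₃ * M₂₃) := Real.sqrt_pos.2 (by positivity)
  set σ₀ := min (ε / (2 * W)) (min (√(M₁₃ * M₂₃) / (8 * W)) (M₁₃ * M₂₃ / (64 * C * V)))
  have h₁ : ε ≤ M₁₃ / 4 := min_le_left _ _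
  have h₂ : ε ≤ M₂₃ / 4 := (min_le_right _ _).trans (min_le_left _ _)
  have h₃ := (le_div_iff₀ (by positivity)).1
    ((min_le_right _ _).trans (min_le_right _ _) : ε ≤ M₁₃ * M₂₃ / (64 * M₁₄))
  have h₄ := (le_div_iff₀ (by positivity)).1 (min_le_left _ _ : σ₀ ≤ ε / (2 * W))
  have h₅ := (le_div_iff₀ (by positivity)).1
    ((min_le_right _ _).trans (min_le_left _ _) : σ₀ ≤ √(M₁₃ * M₂₃) / (8 * W))
  have h₆ := (le_div_iff₀ (by positivity)).1
    ((min_le_right _ _).trans (min_le_right _ _) : σ₀ ≤ M₁₃ * M₂₃ / (64 * C * V))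
  exact ⟨ε, hε, σ₀, by positivity, by linarith, by linarith, by linarith, by linarith,
    by linarith, by linarith⟩

theorem exists_pos_mul_integral_sub_average_sq_le (hV : 0 < μ.real Set.univ)
    (hpq : p.HolderConjugate q) {C M₁₃ M₂₃ M₁₄ : ℝ} (hC : 0 < C)
    (hM₁₃ : 0 < M₁₃) (hM₂₃ : 0 < M₂₃) (hM₁₄ : 0 < M₁₄) :
    ∃ K > 0, ∀ U₁ U₂ U₃ U₄ : X → ℝ, MemLp U₁ ⊤ μ → MemLp U₂ ⊤ μ → MemLp U₃ ⊤ μ →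
      MemLp U₄ ⊤ μ → 0 ≤ᵐ[μ] U₁ → 0 ≤ᵐ[μ] U₂ →
      ∫ x, U₁ x ^ 2 ∂μ + ∫ x, U₃ x ^ 2 ∂μ = M₁₃ → ∫ x, U₂ x ^ 2 ∂μ + ∫ x, U₃ x ^ 2 ∂μ = M₂₃ →
      ∫ x, U₁ x ^ 2 ∂μ + ∫ x, U₄ x ^ 2 ∂μ = M₁₄ → ∀ σ : ℝ,
      (∫ x, |U₁ x - ⨍ y, U₁ y ∂μ| ^ (2 * p) ∂μ) ^ (1 / p) ≤ σ →
      (∫ x, |U₂ x - ⨍ y, U₂ y ∂μ| ^ (2 * p) ∂μ) ^ (1 / p) ≤ σ →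
      (∫ x, |U₃ x - ⨍ y, U₃ y ∂μ| ^ (2 * p) ∂μ) ^ (1 / p) ≤ σ →
      ∫ x, (U₁ x * U₂ x - U₃ x * U₄ x) ^ 2 ∂μ ≤ C * σ →
      K * ∫ x, (U₄ x - ⨍ y, U₄ y ∂μ) ^ 2 ∂μ
        ≤ σ * (1 + max ((∫ x, |U₁ x ^ 2| ^ q ∂μ) ^ (1 / q))
          ((∫ x, |U₄ x ^ 2| ^ q ∂μ) ^ (1 / q))) := by
  set V := μ.real Set.univ
  set W := V ^ (1 / q)
  have hW : 0 < W := by positivity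
  obtain ⟨ε, hε, σ₀, hσ₀, hε₁₃, hε₂₃, hε₁₄, hσ₀ε, hσ₀R, hσ₀C⟩ :=
    exists_pos_thresholds hM₁₃ hM₂₃ hM₁₄ hC hV hW
  set Λ := V * (2 + C) + M₂₃ * W
  refine ⟨min (σ₀ / M₁₄) (ε / (8 * Λ)), by positivity, ?_⟩
  intro U₁ U₂ U₃ U₄ h₁ h₂ h₃ h₄ h₁₀ h₂₀ hm₁₃ hm₂₃ hm₁₄ σ hS₁ hS₂ hS₃ hδ
  set A₁ := (∫ x, |U₁ x ^ 2| ^ q ∂μ) ^ (1 / q)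
  set A₄ := (∫ x, |U₄ x ^ 2| ^ q ∂μ) ^ (1 / q)
  set var₄ := ∫ x, (U₄ x - ⨍ y, U₄ y ∂μ) ^ 2 ∂μ
  have hvar₄ : 0 ≤ var₄ := integral_nonneg fun x => sq_nonneg _
  have hσ : 0 ≤ σ := le_trans (by positivity) hS₁
  have hmax : 0 ≤ max A₁ A₄ := (by positivity : 0 ≤ A₁).trans (le_max_left _ _)
  rcases lt_or_ge σ₀ σ with hlarge | hsmall
  · have hs₁ : 0 ≤ ∫ x, U₁ x ^ 2 ∂μ := integral_nonneg fun x => sq_nonneg _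
    have hvar₄M : var₄ ≤ M₁₄ := by
      nlinarith [integral_sub_average_sq (h₄.mono_exponent (p := 2) le_top)]
    calc min (σ₀ / M₁₄) (ε / (8 * Λ)) * var₄ ≤ σ₀ / M₁₄ * M₁₄ :=
          mul_le_mul (min_le_left _ _) hvar₄M hvar₄ (by positivity)
      _ = σ₀ := div_mul_cancel₀ _ hM₁₄.ne'
      _ ≤ σ * (1 + max A₁ A₄) := by nlinarith
  · have hWσ : W * σ ≤ W * σ₀ := mul_le_mul_of_nonneg_left hsmall (by positivity)
    have hCσ : C * σ * V ≤ C * σ₀ * V := by gcongr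
    have hε₄ := mul_integral_sub_average_sq_le_of_rpow_le hpq h₁ h₂ h₃ h₄ h₁₀ h₂₀ hm₁₃ hm₂₃
      hm₁₄ hS₁ hS₂ hS₃ hδ hε₁₃ hε₂₃ hε₁₄ (by linarith) (by linarith) (by linarith)
    have hΛ : V * (A₁ + A₄ + C) + M₂₃ * W ≤ Λ * (1 + max A₁ A₄) := by
      nlinarith [le_max_left A₁ A₄, le_max_right A₁ A₄, mul_nonneg hV.le hmax,
        mul_nonneg (mul_nonneg hV.le hC.le) hmax, mul_nonneg (mul_nonneg hM₂₃.le hW.le) hmax]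
    calc min (σ₀ / M₁₄) (ε / (8 * Λ)) * var₄ ≤ ε / (8 * Λ) * var₄ :=
          mul_le_mul_of_nonneg_right (min_le_right _ _) hvar₄
      _ ≤ σ * (1 + max A₁ A₄) := by
          rw [div_mul_eq_mul_div, div_le_iff₀ (by positivity)]
          nlinarith [mul_le_mul_of_nonneg_left hΛ (by positivity : (0 : ℝ) ≤ 8 * σ)]

theorem exists_pos_div_mul_integral_sub_average_sq_le (hV : 0 < μ.real Set.univ)
    (hpq : p.HolderConjugate q) {C a₁ a₂ a₃ a₄ M₁₃ M₂₃ M₁₄ : ℝ} (hC : 0 < C)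
    (ha₁ : 0 < a₁) (ha₂ : 0 < a₂) (ha₃ : 0 < a₃) (ha₄ : 0 < a₄)
    (hM₁₃ : 0 < M₁₃) (hM₂₃ : 0 < M₂₃) (hM₁₄ : 0 < M₁₄) :
    ∃ K > 0, ∀ U₁ U₂ U₃ U₄ : X → ℝ, MemLp U₁ ⊤ μ → MemLp U₂ ⊤ μ → MemLp U₃ ⊤ μ →
      MemLp U₄ ⊤ μ → 0 ≤ᵐ[μ] U₁ → 0 ≤ᵐ[μ] U₂ →
      ∫ x, U₁ x ^ 2 ∂μ + ∫ x, U₃ x ^ 2 ∂μ = M₁₃ → ∫ x, U₂ x ^ 2 ∂μ + ∫ x, U₃ x ^ 2 ∂μ = M₂₃ →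
      ∫ x, U₁ x ^ 2 ∂μ + ∫ x, U₄ x ^ 2 ∂μ = M₁₄ → ∀ I₁ I₂ I₃ : ℝ,
      C * (∫ x, |U₁ x - ⨍ y, U₁ y ∂μ| ^ (2 * p) ∂μ) ^ (1 / p) ≤ I₁ →
      C * (∫ x, |U₂ x - ⨍ y, U₂ y ∂μ| ^ (2 * p) ∂μ) ^ (1 / p) ≤ I₂ →
      C * (∫ x, |U₃ x - ⨍ y, U₃ y ∂μ| ^ (2 * p) ∂μ) ^ (1 / p) ≤ I₃ →
      K / (1 + max ((∫ x, |U₁ x ^ 2| ^ q ∂μ) ^ (1 / q)) ((∫ x, |U₄ x ^ 2| ^ q ∂μ) ^ (1 / q)))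
          * ∫ x, (U₄ x - ⨍ y, U₄ y ∂μ) ^ 2 ∂μ
        ≤ a₁ * I₁ + a₂ * I₂ + a₃ * I₃ + a₄ * ∫ x, (U₁ x * U₂ x - U₃ x * U₄ x) ^ 2 ∂μ := by
  obtain ⟨K, hK, hKvar⟩ := exists_pos_mul_integral_sub_average_sq_le hV hpq hC hM₁₃ hM₂₃ hM₁₄
  set D := min (min a₁ a₂) (min a₃ a₄)
  have hD : 0 < D := by positivity
  refine ⟨C * D * K, by positivity, ?_⟩
  intro U₁ U₂ U₃ U₄ h₁ h₂ h₃ h₄ h₁₀ h₂₀ hm₁₃ hm₂₃ hm₁₄ I₁ I₂ I₃ hI₁ hI₂ hI₃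
  set Iδ := ∫ x, (U₁ x * U₂ x - U₃ x * U₄ x) ^ 2 ∂μ
  set G := a₁ * I₁ + a₂ * I₂ + a₃ * I₃ + a₄ * Iδ
  set L := 1 + max ((∫ x, |U₁ x ^ 2| ^ q ∂μ) ^ (1 / q)) ((∫ x, |U₄ x ^ 2| ^ q ∂μ) ^ (1 / q))
  have hS : ∀ {f : X → ℝ}, 0 ≤ (∫ x, |f x - ⨍ y, f y ∂μ| ^ (2 * p) ∂μ) ^ (1 / p) :=
    fun {_} => by positivity
  have hI₁₀ := (mul_nonneg hC.le hS).trans hI₁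
  have hI₂₀ := (mul_nonneg hC.le hS).trans hI₂
  have hI₃₀ := (mul_nonneg hC.le hS).trans hI₃
  have hIδ : 0 ≤ Iδ := integral_nonneg fun x => sq_nonneg _
  have hσ : ∀ {S I a : ℝ}, 0 ≤ I → C * S ≤ I → D ≤ a → a * I ≤ G → S ≤ G / (C * D) :=
    fun hI hCS hDa haI => by
      rw [le_div_iff₀ (by positivity)]
      nlinarith [mul_le_mul_of_nonneg_left hCS hD.le, mul_le_mul_of_nonneg_right hDa hI]
  have hvar := hKvar U₁ U₂ U₃ U₄ h₁ h₂ h₃ h₄ h₁₀ h₂₀ hm₁₃ hm₂₃ hm₁₄ (G / (C * D))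
    (hσ hI₁₀ hI₁ ((min_le_left _ _).trans (min_le_left _ _)) (by nlinarith))
    (hσ hI₂₀ hI₂ ((min_le_left _ _).trans (min_le_right _ _)) (by nlinarith))
    (hσ hI₃₀ hI₃ ((min_le_right _ _).trans (min_le_left _ _)) (by nlinarith))
    (by
      rw [show C * (G / (C * D)) = G / D by field_simp, le_div_iff₀ hD]
      nlinarith [mul_le_mul_of_nonneg_right
        ((min_le_right _ _).trans (min_le_right _ _) : D ≤ a₄) hIδ])
  have hL : 0 < L := by positivity
  calc C * D * K / L * ∫ x, (U₄ x - ⨍ y, U₄ y ∂μ) ^ 2 ∂μ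
      = C * D * (K * ∫ x, (U₄ x - ⨍ y, U₄ y ∂μ) ^ 2 ∂μ) / L := by ring
    _ ≤ C * D * (G / (C * D) * L) / L := by gcongr
    _ = G := by field_simp

end

theorem memLp_top_restrict_sqrt {α : Type*} [MeasurableSpace α] {μ : Measure α} {s : Set α}
    {u : α → ℝ} (hu : Measurable u) (hs : MeasurableSet s) (hB : ∃ B, ∀ x ∈ s, u x ≤ B) :
    MemLp (fun x => √(u x)) ⊤ (μ.restrict s) := by
  obtain ⟨B, hB⟩ := hB
  refine memLp_top_of_bound hu.sqrt.aestronglyMeasurable √B ((ae_restrict_iff' hs).2 ?_)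
  exact ae_of_all _ fun x hx => by
    rw [Real.norm_of_nonneg (Real.sqrt_nonneg _)]
    exact Real.sqrt_le_sqrt (hB x hx)

theorem setIntegral_add_eq_integral_sqrt_sq {α : Type*} [MeasurableSpace α] {μ : Measure α}
    {s : Set α} [IsFiniteMeasure (μ.restrict s)] (hs : MeasurableSet s) {u v : α → ℝ}
    (hu : ∀ x ∈ s, 0 ≤ u x) (hv : ∀ x ∈ s, 0 ≤ v x)
    (hU : MemLp (fun x => √(u x)) ⊤ (μ.restrict s))
    (hV : MemLp (fun x => √(v x)) ⊤ (μ.restrict s)) :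
    ∫ x in s, (u x + v x) ∂μ = ∫ x in s, √(u x) ^ 2 ∂μ + ∫ x in s, √(v x) ^ 2 ∂μ := by
  rw [← integral_add (hU.sq_of_top.integrable le_top) (hV.sq_of_top.integrable le_top)]
  exact setIntegral_congr_fun hs fun x hx => by
    simp only [Real.sq_sqrt (hu x hx), Real.sq_sqrt (hv x hx)]

theorem setIntegral_abs_rpow_eq_sqrt_sq {α : Type*} [MeasurableSpace α] {μ : Measure α}
    {s : Set α} (hs : MeasurableSet s) {u : α → ℝ} (hu : ∀ x ∈ s, 0 ≤ u x) (r : ℝ) :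
    ∫ x in s, |u x| ^ r ∂μ = ∫ x in s, |√(u x) ^ 2| ^ r ∂μ :=
  setIntegral_congr_fun hs fun x hx => by rw [Real.sq_sqrt (hu x hx)]

theorem ContDiff.integrableOn_norm_fderiv_sq {E : Type*} [NormedAddCommGroup E]
    [NormedSpace ℝ E] [ProperSpace E] [MeasurableSpace E] [BorelSpace E] {μ : Measure E}
    [IsFiniteMeasureOnCompacts μ] {f : E → ℝ} (hf : ContDiff ℝ 1 f) {s : Set E}
    (hs : Bornology.IsBounded s) : IntegrableOn (fun x => ‖fderiv ℝ f x‖ ^ 2) s μ :=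
  (((hf.continuous_fderiv one_ne_zero).norm.pow 2).continuousOn.integrableOn_compact
    hs.isCompact_closure).mono_set subset_closure

theorem IsOpen.measureReal_restrict_univ_pos {E : Type*} [TopologicalSpace E] [MeasurableSpace E]
    {μ : Measure E} [μ.IsOpenPosMeasure] {s : Set E} (hs : IsOpen s) (hne : s.Nonempty)
    (hμs : μ s ≠ ⊤) : 0 < (μ.restrict s).real Set.univ := by
  rw [measureReal_restrict_apply_univ]
  exact ENNReal.toReal_pos (hs.measure_pos μ hne).ne' hμs

/-- Indirect diffusion effect in dimensions `N ≥ 3`: assuming a Poincaré–Wirtinger–Sobolev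
inequality on `Ω`, there is `K2 > 0` depending only on `Ω, C_Ω, d₁, d₂, d₃, M₁₃, M₂₃, M₁₄`
such that
`D~(U) ≥ K2 / (1 + max(‖u₁‖_{L^{N/2}}, ‖u₄‖_{L^{N/2}})) * ‖U₄ - U̅₄‖_{L²(Ω)}²`. -/
theorem indirect_diffusion_effect_dim_ge_three
    (N : ℕ) (hN : 3 ≤ N) (Ω : Set (EuclideanSpace ℝ (Fin N)))
    (hΩne : Ω.Nonempty) (hΩopen : IsOpen Ω) (hΩbd : Bornology.IsBounded Ω)
    (d1 d2 d3 M13 M23 M14 : ℝ)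
    (hd1 : 0 < d1) (hd2 : 0 < d2) (hd3 : 0 < d3)
    (hM13 : 0 < M13) (hM23 : 0 < M23) (hM14 : 0 < M14)
    (CΩ : ℝ) (hCΩ : 0 < CΩ)
    -- Poincaré–Wirtinger–Sobolev inequality on Ω
    (hPW : ∀ f : EuclideanSpace ℝ (Fin N) → ℝ, ContDiff ℝ 1 f →
      CΩ * (∫ x in Ω, |f x - ⨍ y in Ω, f y| ^ ((2 * (N : ℝ)) / ((N : ℝ) - 2)))
          ^ (((N : ℝ) - 2) / (2 * (N : ℝ)))
        ≤ (∫ x in Ω, ‖fderiv ℝ f x‖ ^ 2) ^ ((1 : ℝ) / 2)) :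
    ∃ K2 : ℝ, 0 < K2 ∧
      ∀ u1 u2 u3 u4 : EuclideanSpace ℝ (Fin N) → ℝ,
        Measurable u1 → Measurable u2 → Measurable u3 → Measurable u4 →
        (∀ x ∈ Ω, 0 ≤ u1 x) → (∀ x ∈ Ω, 0 ≤ u2 x) →
        (∀ x ∈ Ω, 0 ≤ u3 x) → (∀ x ∈ Ω, 0 ≤ u4 x) →
        (∃ B : ℝ, ∀ x ∈ Ω, u1 x ≤ B) → (∃ B : ℝ, ∀ x ∈ Ω, u2 x ≤ B) →
        (∃ B : ℝ, ∀ x ∈ Ω, u3 x ≤ B) → (∃ B : ℝ, ∀ x ∈ Ω, u4 x ≤ B) →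
        ContDiff ℝ 1 (fun x => Real.sqrt (u1 x)) →
        ContDiff ℝ 1 (fun x => Real.sqrt (u2 x)) →
        ContDiff ℝ 1 (fun x => Real.sqrt (u3 x)) →
        (∫ x in Ω, (u1 x + u3 x)) = M13 →
        (∫ x in Ω, (u2 x + u3 x)) = M23 →
        (∫ x in Ω, (u1 x + u4 x)) = M14 →
        4 * (d1 * ∫ x in Ω, ‖fderiv ℝ (fun y => Real.sqrt (u1 y)) x‖ ^ 2
          + d2 * ∫ x in Ω, ‖fderiv ℝ (fun y => Real.sqrt (u2 y)) x‖ ^ 2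
          + d3 * ∫ x in Ω, ‖fderiv ℝ (fun y => Real.sqrt (u3 y)) x‖ ^ 2
          + ∫ x in Ω, (Real.sqrt (u1 x) * Real.sqrt (u2 x)
              - Real.sqrt (u3 x) * Real.sqrt (u4 x)) ^ 2)
        ≥ K2 / (1 + max
              ((∫ x in Ω, |u1 x| ^ ((N : ℝ) / 2)) ^ (2 / (N : ℝ)))
              ((∫ x in Ω, |u4 x| ^ ((N : ℝ) / 2)) ^ (2 / (N : ℝ))))
          * ∫ x in Ω, (Real.sqrt (u4 x) - ⨍ y in Ω, Real.sqrt (u4 y)) ^ 2 := by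
  have hΩm : MeasurableSet Ω := hΩopen.measurableSet
  have : IsFiniteMeasure (volume.restrict Ω) := isFiniteMeasure_restrict.2 hΩbd.measure_lt_top.ne
  set V := (volume.restrict Ω).real Set.univ
  have hV : 0 < V := hΩopen.measureReal_restrict_univ_pos hΩne hΩbd.measure_lt_top.ne
  have hN2 : (2 : ℝ) < N := by exact_mod_cast hN
  -- Each `∫ x in Ω,` of the statement extends to the end of `D~`, so its integrals are nested;
  -- flattening them produces these weights.
  obtain ⟨K, hK, hKest⟩ := exists_pos_div_mul_integral_sub_average_sq_le hV
    (Real.holderConjugate_div_sub_two hN2) (pow_pos hCΩ 2) (a₁ := 4 * d1) (a₂ := 4 * d1 * d2 * V)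
    (a₃ := 4 * d1 * d2 * d3 * V ^ 2) (a₄ := 4 * d1 * d2 * d3 * V ^ 3) (by positivity)
    (by positivity) (by positivity) (by positivity) hM13 hM23 hM14
  refine ⟨K, hK, fun u1 u2 u3 u4 hu1 hu2 hu3 hu4 h1 h2 h3 h4 hB1 hB2 hB3 hB4 hs1 hs2 hs3
    hm13 hm23 hm14 => ?_⟩
  have hU1 := memLp_top_restrict_sqrt (μ := volume) hu1 hΩm hB1
  have hU2 := memLp_top_restrict_sqrt (μ := volume) hu2 hΩm hB2
  have hU3 := memLp_top_restrict_sqrt (μ := volume) hu3 hΩm hB3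
  have hU4 := memLp_top_restrict_sqrt (μ := volume) hu4 hΩm hB4
  have key := hKest _ _ _ _ hU1 hU2 hU3 hU4 (ae_of_all _ fun _ => Real.sqrt_nonneg _)
    (ae_of_all _ fun _ => Real.sqrt_nonneg _)
    ((setIntegral_add_eq_integral_sqrt_sq hΩm h1 h3 hU1 hU3).symm.trans hm13)
    ((setIntegral_add_eq_integral_sqrt_sq hΩm h2 h3 hU2 hU3).symm.trans hm23)
    ((setIntegral_add_eq_integral_sqrt_sq hΩm h1 h4 hU1 hU4).symm.trans hm14) _ _ _
    (sq_mul_rpow_le_of_mul_rpow_le_rpow_half hN2 hCΩ.le (hPW _ hs1))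
    (sq_mul_rpow_le_of_mul_rpow_le_rpow_half hN2 hCΩ.le (hPW _ hs2))
    (sq_mul_rpow_le_of_mul_rpow_le_rpow_half hN2 hCΩ.le (hPW _ hs3))
  rw [integral_add_const (hs3.integrableOn_norm_fderiv_sq hΩbd),
    integral_add_const (hs2.integrableOn_norm_fderiv_sq hΩbd),
    integral_add_const (hs1.integrableOn_norm_fderiv_sq hΩbd), ← one_div_div (N : ℝ) 2,
    setIntegral_abs_rpow_eq_sqrt_sq hΩm h1, setIntegral_abs_rpow_eq_sqrt_sq hΩm h4, ge_iff_le]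
  exact key.trans_eq (by ring)
end

section
/- Let Omega ⊂ R^N be a measurable set with finite positive Lebesgue measure |Omega|, and let u_{1,∞}, u_{2,∞}, u_{3,∞}, u_{4,∞} > 0 be constants. Then there exists a constant C > 0, depending only on |Omega| and the constants u_{i,∞}, such that for all bounded nonnegative measurable functions u1, u2, u3, u4 on Omega: sum_{i=1}^4 ∫_Omega ( u_i log(u_i/u_{i,∞}) - u_i + u_{i,∞} ) dx <= C * (1 + max_{i=1..4} log(||u_i||_{L^∞(Omega)} + 1)) * ( sum_{i=1}^4 ||U_i - Ū_i||_{L^2(Omega)}^2 + |Omega| * sum_{i=1}^4 | sqrt( (1/|Omega|)∫_Omega u_i dx ) - sqrt(u_{i,∞}) |^2 ), where U_i := sqrt(u_i) and Ū_i := (1/|Omega|)∫_Omega U_i dx, with the convention 0*log 0 = 0. -/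
/-!
Pointwise, for `0 ≤ a ≤ M` and `c > 0`, the entropy density `a log (a / c) - a + c` is at most
`(4 + log⁺ (a / c)) (√a - √c)²`: below `c` it is bounded by the `χ²` term `(a - c)² / c`, above
`c` by `(a - c) log (a / c)`, and `log⁺ (a / c) ≤ log (M + 1) + |log c|`. After integration,
`∫ (√u - √c)²` is the variance of `√u` plus `|Ω| (⨍ √u - √c)²`. Since `0 ≤ ⨍ √u ≤ √(⨍ u)` and
`|Ω| (√(⨍ u) - ⨍ √u)²` is itself bounded by the variance, the mean `⨍ √u` can be replaced by
`√(⨍ u)` at the cost of a factor `3`.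
-/

open MeasureTheory Real
open scoped ENNReal

theorem mul_log_div_sub_add_le_sq_div {a c : ℝ} (ha : 0 ≤ a) (hc : 0 < c) :
    a * log (a / c) - a + c ≤ (a - c) ^ 2 / c := by
  have hlog : a * log (a / c) ≤ a * (a / c - 1) := by
    rcases ha.eq_or_lt with rfl | ha
    · simp
    · exact mul_le_mul_of_nonneg_left (log_le_sub_one_of_pos (by positivity)) ha.le
  have : a * (a / c - 1) - a + c = (a - c) ^ 2 / c := by field_simp; ring
  linarith

theorem mul_log_div_sub_add_le_sub_mul_log {a c : ℝ} (ha : 0 < a) (hc : 0 < c) :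
    a * log (a / c) - a + c ≤ (a - c) * log (a / c) := by
  have : c * log (a / c) ≤ c * (a / c - 1) :=
    mul_le_mul_of_nonneg_left (log_le_sub_one_of_pos (by positivity)) hc.le
  have : c * (a / c - 1) = a - c := by field_simp
  linarith

theorem sq_sub_sq_mul_log_le {p q : ℝ} (hq : 0 < q) (hqp : q ≤ p) :
    (p ^ 2 - q ^ 2) * log (p ^ 2 / q ^ 2) ≤ (4 + log (p ^ 2 / q ^ 2)) * (p - q) ^ 2 := by
  have hlog : log (p ^ 2 / q ^ 2) ≤ 2 * ((p - q) / q) := by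
    rw [← div_pow, log_pow, Nat.cast_ofNat]
    have := log_le_sub_one_of_pos (div_pos (hq.trans_le hqp) hq)
    rw [div_sub_one hq.ne'] at this
    linarith
  have hcross : 2 * q * (p - q) * log (p ^ 2 / q ^ 2) ≤ 4 * (p - q) ^ 2 := by
    calc 2 * q * (p - q) * log (p ^ 2 / q ^ 2) ≤ 2 * q * (p - q) * (2 * ((p - q) / q)) := by
          gcongr
      _ = 4 * (p - q) ^ 2 := by field_simp; ring
  linear_combination hcross

theorem mul_log_div_sub_add_le {a c : ℝ} (ha : 0 ≤ a) (hc : 0 < c) :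
    a * log (a / c) - a + c ≤ (4 + log⁺ (a / c)) * (√a - √c) ^ 2 := by
  have hsq : (a - c) ^ 2 = (√a - √c) ^ 2 * (√a + √c) ^ 2 := by
    rw [← mul_pow, mul_comm, ← sq_sub_sq, sq_sqrt ha, sq_sqrt hc.le]
  rcases le_total a c with hac | hca
  · have hsum : (√a + √c) ^ 2 ≤ 4 * c := by
      have := sqrt_le_sqrt hac
      nlinarith [sq_sqrt hc.le, sqrt_nonneg a]
    calc a * log (a / c) - a + c ≤ (a - c) ^ 2 / c := mul_log_div_sub_add_le_sq_div ha hc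
      _ ≤ 4 * (√a - √c) ^ 2 := by
        rw [div_le_iff₀ hc, hsq]; nlinarith [sq_nonneg (√a - √c)]
      _ ≤ (4 + log⁺ (a / c)) * (√a - √c) ^ 2 := by
        gcongr; exact le_add_of_nonneg_right posLog_nonneg
  · have ha' : 0 < a := hc.trans_le hca
    rw [posLog_eq_log (by rw [abs_of_pos (by positivity)]; exact (one_le_div hc).2 hca)]
    calc a * log (a / c) - a + c ≤ (a - c) * log (a / c) :=
          mul_log_div_sub_add_le_sub_mul_log ha' hc
      _ ≤ (4 + log (a / c)) * (√a - √c) ^ 2 := by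
        have := sq_sub_sq_mul_log_le (sqrt_pos.2 hc) (sqrt_le_sqrt hca)
        rwa [sq_sqrt ha, sq_sqrt hc.le] at this

theorem mul_log_div_sub_add_nonneg {a c : ℝ} (ha : 0 ≤ a) (hc : 0 < c) :
    0 ≤ a * log (a / c) - a + c := by
  rcases ha.eq_or_lt with rfl | ha
  · simpa using hc.le
  · have := mul_le_mul_of_nonneg_left (one_sub_inv_le_log_of_pos (div_pos ha hc)) ha.le
    rw [inv_div, mul_sub, mul_one, mul_div_cancel₀ _ ha.ne'] at this
    linarith

theorem four_add_posLog_div_le {a c M : ℝ} (ha : 0 ≤ a) (haM : a ≤ M) :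
    4 + log⁺ (a / c) ≤ (4 + |log c|) * (1 + log (M + 1)) := by
  have hM : log⁺ a ≤ log (M + 1) := by
    rw [posLog_eq_log_max_one ha]
    exact log_le_log (by positivity) (max_le (by linarith) (by linarith))
  have hc_inv : log⁺ c⁻¹ ≤ |log c| := by
    rw [posLog_apply, log_inv]
    exact max_le (abs_nonneg _) (neg_le_abs _)
  have := posLog_mul (x := a) (y := c⁻¹)
  rw [← div_eq_mul_inv] at this
  nlinarith [abs_nonneg (log c), log_nonneg (show 1 ≤ M + 1 by linarith)]


section Variance

variable {α : Type*} [MeasurableSpace α] {μ : Measure α} [IsFiniteMeasure μ] {f : α → ℝ}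

theorem integral_sub_sq_eq (hf : MemLp f 2 μ) (t : ℝ) :
    ∫ x, (f x - t) ^ 2 ∂μ = ∫ x, f x ^ 2 ∂μ - 2 * t * ∫ x, f x ∂μ + μ.real Set.univ * t ^ 2 := by
  have hf1 : Integrable f μ := hf.integrable one_le_two
  have h2 : Integrable (fun x ↦ 2 * f x * t) μ := (hf1.const_mul 2).mul_const t
  simp_rw [sub_sq]
  rw [integral_add (f := fun x ↦ f x ^ 2 - 2 * f x * t) (hf.integrable_sq.sub h2)
    (integrable_const _), integral_sub hf.integrable_sq h2, integral_mul_const,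
    integral_const_mul, integral_const, smul_eq_mul]
  ring

theorem integral_sub_sq_eq_integral_sub_average_sq_add (hf : MemLp f 2 μ) (t : ℝ) :
    ∫ x, (f x - t) ^ 2 ∂μ =
      ∫ x, (f x - ⨍ y, f y ∂μ) ^ 2 ∂μ + μ.real Set.univ * (⨍ y, f y ∂μ - t) ^ 2 := by
  rw [integral_sub_sq_eq hf, integral_sub_sq_eq hf, ← measure_smul_average μ f, smul_eq_mul]
  ring

theorem measureReal_mul_sq_sqrt_average_sq_sub_average_le (hf : MemLp f 2 μ) (hf0 : 0 ≤ᵐ[μ] f) :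
    μ.real Set.univ * (√(⨍ x, f x ^ 2 ∂μ) - ⨍ x, f x ∂μ) ^ 2 ≤
      ∫ x, (f x - ⨍ y, f y ∂μ) ^ 2 ∂μ := by
  set m := μ.real Set.univ
  set b := ⨍ x, f x ∂μ
  set A := ⨍ x, f x ^ 2 ∂μ
  have hvar : ∫ x, (f x - b) ^ 2 ∂μ = m * (A - b ^ 2) := by
    have := integral_sub_sq_eq_integral_sub_average_sq_add hf 0
    simp only [sub_zero] at this
    rw [← measure_smul_average μ, smul_eq_mul] at this
    linarith
  rcases (show 0 ≤ m from measureReal_nonneg).eq_or_lt with hm | hm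
  · rw [← hm, zero_mul]
    exact integral_nonneg fun _ ↦ sq_nonneg _
  have hb : 0 ≤ b := by
    refine nonneg_of_mul_nonneg_right ?_ hm
    rw [← smul_eq_mul, measure_smul_average]
    exact integral_nonneg_of_ae hf0
  have hb_sq : b ^ 2 ≤ A := by
    have : 0 ≤ ∫ x, (f x - b) ^ 2 ∂μ := integral_nonneg fun x ↦ sq_nonneg (f x - b)
    nlinarith
  have hA : 0 ≤ A := (sq_nonneg b).trans hb_sq
  have hb_le : b ≤ √A := le_sqrt_of_sq_le hb_sq
  rw [hvar]
  gcongr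
  nlinarith [sq_sqrt hA]

theorem integral_sub_sq_le (hf : MemLp f 2 μ) (hf0 : 0 ≤ᵐ[μ] f) (t : ℝ) :
    ∫ x, (f x - t) ^ 2 ∂μ ≤
      3 * ∫ x, (f x - ⨍ y, f y ∂μ) ^ 2 ∂μ + 2 * μ.real Set.univ * (√(⨍ x, f x ^ 2 ∂μ) - t) ^ 2 := by
  have hmean := measureReal_mul_sq_sqrt_average_sq_sub_average_le hf hf0
  have htriangle : (⨍ y, f y ∂μ - t) ^ 2 ≤
      2 * (√(⨍ x, f x ^ 2 ∂μ) - ⨍ y, f y ∂μ) ^ 2 + 2 * (√(⨍ x, f x ^ 2 ∂μ) - t) ^ 2 := by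
    nlinarith [sq_nonneg (2 * √(⨍ x, f x ^ 2 ∂μ) - ⨍ y, f y ∂μ - t)]
  rw [integral_sub_sq_eq_integral_sub_average_sq_add hf]
  nlinarith [mul_le_mul_of_nonneg_left htriangle (measureReal_nonneg (μ := μ) (s := Set.univ))]

end Variance

section Entropy

variable {α : Type*} [MeasurableSpace α] {μ : Measure α} [IsFiniteMeasure μ] {u : α → ℝ} {c M : ℝ}

theorem memLp_sqrt_of_ae_mem_Icc (hu : AEStronglyMeasurable u μ)
    (hbd : ∀ᵐ x ∂μ, u x ∈ Set.Icc 0 M) (p : ℝ≥0∞) : MemLp (fun x ↦ √(u x)) p μ :=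
  memLp_of_bounded (hbd.mono fun _ hx ↦ ⟨sqrt_nonneg _, sqrt_le_sqrt hx.2⟩)
    (continuous_sqrt.comp_aestronglyMeasurable hu) p

theorem integral_mul_log_div_sub_add_le_integral_sq (hu : AEStronglyMeasurable u μ)
    (hbd : ∀ᵐ x ∂μ, u x ∈ Set.Icc 0 M) (hc : 0 < c) :
    ∫ x, (u x * log (u x / c) - u x + c) ∂μ ≤
      (4 + |log c|) * (1 + log (M + 1)) * ∫ x, (√(u x) - √c) ^ 2 ∂μ := by
  rw [← integral_const_mul]
  refine integral_mono_of_nonneg (hbd.mono fun x hx ↦ mul_log_div_sub_add_nonneg hx.1 hc)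
    ((((memLp_sqrt_of_ae_mem_Icc hu hbd 2).sub (memLp_const √c)).integrable_sq).const_mul _)
    (hbd.mono fun x hx ↦ ?_)
  exact (mul_log_div_sub_add_le hx.1 hc).trans
    (mul_le_mul_of_nonneg_right (four_add_posLog_div_le hx.1 hx.2) (sq_nonneg _))

theorem integral_mul_log_div_sub_add_le {K L : ℝ} (hu : AEStronglyMeasurable u μ)
    (hbd : ∀ᵐ x ∂μ, u x ∈ Set.Icc 0 M) (hM : 0 ≤ M) (hc : 0 < c)
    (hK : 4 + |log c| ≤ K) (hL : log (M + 1) ≤ L) :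
    ∫ x, (u x * log (u x / c) - u x + c) ∂μ ≤
      3 * K * (1 + L) * (∫ x, (√(u x) - ⨍ y, √(u y) ∂μ) ^ 2 ∂μ
        + μ.real Set.univ * (√(⨍ x, u x ∂μ) - √c) ^ 2) := by
  have hsq : ⨍ x, √(u x) ^ 2 ∂μ = ⨍ x, u x ∂μ :=
    average_congr (hbd.mono fun x hx ↦ sq_sqrt hx.1)
  have hroot := integral_sub_sq_le (memLp_sqrt_of_ae_mem_Icc hu hbd 2)
    (ae_of_all _ fun _ ↦ sqrt_nonneg _) √c
  rw [hsq] at hroot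
  have hL0 : 0 ≤ log (M + 1) := log_nonneg (by linarith)
  have hS : 0 ≤ μ.real Set.univ * (√(⨍ x, u x ∂μ) - √c) ^ 2 := by positivity
  calc ∫ x, (u x * log (u x / c) - u x + c) ∂μ
      ≤ (4 + |log c|) * (1 + log (M + 1)) * ∫ x, (√(u x) - √c) ^ 2 ∂μ :=
        integral_mul_log_div_sub_add_le_integral_sq hu hbd hc
    _ ≤ (4 + |log c|) * (1 + log (M + 1)) * (3 * (∫ x, (√(u x) - ⨍ y, √(u y) ∂μ) ^ 2 ∂μ
        + μ.real Set.univ * (√(⨍ x, u x ∂μ) - √c) ^ 2)) := by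
        gcongr; linarith
    _ ≤ 3 * K * (1 + L) * (∫ x, (√(u x) - ⨍ y, √(u y) ∂μ) ^ 2 ∂μ
        + μ.real Set.univ * (√(⨍ x, u x ∂μ) - √c) ^ 2) := by
        rw [mul_left_comm, ← mul_assoc 3, ← mul_assoc 3]
        gcongr
        linarith [abs_nonneg (log c)]

end Entropy

theorem ae_mem_Icc_toReal_eLpNorm_top {α : Type*} [MeasurableSpace α] {μ : Measure α}
    {s : Set α} {u : α → ℝ} (hs : MeasurableSet s) (hu : AEStronglyMeasurable u (μ.restrict s))
    (h0 : ∀ x ∈ s, 0 ≤ u x) (hfin : eLpNorm u ⊤ (μ.restrict s) < ⊤) :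
    ∀ᵐ x ∂μ.restrict s, u x ∈ Set.Icc 0 (eLpNorm u ⊤ (μ.restrict s)).toReal := by
  filter_upwards [ae_restrict_of_forall_mem hs h0, ae_le_lpNorm_exponent_top ⟨hu, hfin⟩]
    with x hx0 hxM
  rw [toReal_eLpNorm hu]
  exact ⟨hx0, (le_abs_self _).trans hxM⟩

theorem relative_entropy_upper_bound_general
    (N : ℕ) (Ω : Set (EuclideanSpace ℝ (Fin N)))
    (hΩ : MeasurableSet Ω) (hΩfin : volume Ω < ⊤)
    (c1 c2 c3 c4 : ℝ) (hc1 : 0 < c1) (hc2 : 0 < c2) (hc3 : 0 < c3) (hc4 : 0 < c4) :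
    ∃ C : ℝ, 0 < C ∧
      ∀ u1 u2 u3 u4 : EuclideanSpace ℝ (Fin N) → ℝ,
        Measurable u1 → Measurable u2 → Measurable u3 → Measurable u4 →
        (∀ x ∈ Ω, 0 ≤ u1 x) → (∀ x ∈ Ω, 0 ≤ u2 x) →
        (∀ x ∈ Ω, 0 ≤ u3 x) → (∀ x ∈ Ω, 0 ≤ u4 x) →
        eLpNorm u1 ⊤ (volume.restrict Ω) < ⊤ →
        eLpNorm u2 ⊤ (volume.restrict Ω) < ⊤ →
        eLpNorm u3 ⊤ (volume.restrict Ω) < ⊤ →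
        eLpNorm u4 ⊤ (volume.restrict Ω) < ⊤ →
        (∫ x in Ω, (u1 x * Real.log (u1 x / c1) - u1 x + c1))
          + (∫ x in Ω, (u2 x * Real.log (u2 x / c2) - u2 x + c2))
          + (∫ x in Ω, (u3 x * Real.log (u3 x / c3) - u3 x + c3))
          + (∫ x in Ω, (u4 x * Real.log (u4 x / c4) - u4 x + c4))
        ≤ C * (1 + max (max (max
              (Real.log ((eLpNorm u1 ⊤ (volume.restrict Ω)).toReal + 1))
              (Real.log ((eLpNorm u2 ⊤ (volume.restrict Ω)).toReal + 1)))
              (Real.log ((eLpNorm u3 ⊤ (volume.restrict Ω)).toReal + 1)))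
              (Real.log ((eLpNorm u4 ⊤ (volume.restrict Ω)).toReal + 1)))
          * ((∫ x in Ω, (Real.sqrt (u1 x) - ⨍ y in Ω, Real.sqrt (u1 y)) ^ 2)
            + (∫ x in Ω, (Real.sqrt (u2 x) - ⨍ y in Ω, Real.sqrt (u2 y)) ^ 2)
            + (∫ x in Ω, (Real.sqrt (u3 x) - ⨍ y in Ω, Real.sqrt (u3 y)) ^ 2)
            + (∫ x in Ω, (Real.sqrt (u4 x) - ⨍ y in Ω, Real.sqrt (u4 y)) ^ 2)
            + (volume Ω).toReal *
              ((Real.sqrt (⨍ x in Ω, u1 x) - Real.sqrt c1) ^ 2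
                + (Real.sqrt (⨍ x in Ω, u2 x) - Real.sqrt c2) ^ 2
                + (Real.sqrt (⨍ x in Ω, u3 x) - Real.sqrt c3) ^ 2
                + (Real.sqrt (⨍ x in Ω, u4 x) - Real.sqrt c4) ^ 2)) := by
  set μ := volume.restrict Ω
  set K := max (max (max (4 + |log c1|) (4 + |log c2|)) (4 + |log c3|)) (4 + |log c4|)
  refine ⟨3 * K, by positivity, ?_⟩
  intro u1 u2 u3 u4 hu1 hu2 hu3 hu4 h01 h02 h03 h04 hfin1 hfin2 hfin3 hfin4
  set L := max (max (max (log ((eLpNorm u1 ⊤ μ).toReal + 1)) (log ((eLpNorm u2 ⊤ μ).toReal + 1)))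
    (log ((eLpNorm u3 ⊤ μ).toReal + 1))) (log ((eLpNorm u4 ⊤ μ).toReal + 1))
  have : IsFiniteMeasure μ := isFiniteMeasure_restrict.2 hΩfin.ne
  have species {u : EuclideanSpace ℝ (Fin N) → ℝ} {c : ℝ} (hu : Measurable u)
      (h0 : ∀ x ∈ Ω, 0 ≤ u x) (hfin : eLpNorm u ⊤ μ < ⊤) (hc : 0 < c)
      (hK : 4 + |log c| ≤ K) (hL : log ((eLpNorm u ⊤ μ).toReal + 1) ≤ L) :=
    integral_mul_log_div_sub_add_le hu.aestronglyMeasurable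
      (ae_mem_Icc_toReal_eLpNorm_top hΩ hu.aestronglyMeasurable h0 hfin) ENNReal.toReal_nonneg
      hc hK hL
  rw [← measureReal_def, ← measureReal_restrict_apply_univ]
  linarith [species hu1 h01 hfin1 hc1 (by simp [K]) (by simp [L]),
    species hu2 h02 hfin2 hc2 (by simp [K]) (by simp [L]),
    species hu3 h03 hfin3 hc3 (by simp [K]) (by simp [L]),
    species hu4 h04 hfin4 hc4 (by simp [K]) (by simp [L])]

/-- Upper bound for the relative entropy `H(u|u_∞)` by the `L²` deviations of the square
roots from their averages plus the deviation of the averaged masses from equilibrium. -/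
theorem relative_entropy_upper_bound
    (N : ℕ) (Ω : Set (EuclideanSpace ℝ (Fin N)))
    (hΩ : MeasurableSet Ω) (hΩpos : 0 < volume Ω) (hΩfin : volume Ω < ⊤)
    (c1 c2 c3 c4 : ℝ) (hc1 : 0 < c1) (hc2 : 0 < c2) (hc3 : 0 < c3) (hc4 : 0 < c4) :
    ∃ C : ℝ, 0 < C ∧
      ∀ u1 u2 u3 u4 : EuclideanSpace ℝ (Fin N) → ℝ,
        Measurable u1 → Measurable u2 → Measurable u3 → Measurable u4 →
        (∀ x ∈ Ω, 0 ≤ u1 x) → (∀ x ∈ Ω, 0 ≤ u2 x) →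
        (∀ x ∈ Ω, 0 ≤ u3 x) → (∀ x ∈ Ω, 0 ≤ u4 x) →
        eLpNorm u1 ⊤ (volume.restrict Ω) < ⊤ →
        eLpNorm u2 ⊤ (volume.restrict Ω) < ⊤ →
        eLpNorm u3 ⊤ (volume.restrict Ω) < ⊤ →
        eLpNorm u4 ⊤ (volume.restrict Ω) < ⊤ →
        (∫ x in Ω, (u1 x * Real.log (u1 x / c1) - u1 x + c1))
          + (∫ x in Ω, (u2 x * Real.log (u2 x / c2) - u2 x + c2))
          + (∫ x in Ω, (u3 x * Real.log (u3 x / c3) - u3 x + c3))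
          + (∫ x in Ω, (u4 x * Real.log (u4 x / c4) - u4 x + c4))
        ≤ C * (1 + max (max (max
              (Real.log ((eLpNorm u1 ⊤ (volume.restrict Ω)).toReal + 1))
              (Real.log ((eLpNorm u2 ⊤ (volume.restrict Ω)).toReal + 1)))
              (Real.log ((eLpNorm u3 ⊤ (volume.restrict Ω)).toReal + 1)))
              (Real.log ((eLpNorm u4 ⊤ (volume.restrict Ω)).toReal + 1)))
          * ((∫ x in Ω, (Real.sqrt (u1 x) - ⨍ y in Ω, Real.sqrt (u1 y)) ^ 2)
            + (∫ x in Ω, (Real.sqrt (u2 x) - ⨍ y in Ω, Real.sqrt (u2 y)) ^ 2)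
            + (∫ x in Ω, (Real.sqrt (u3 x) - ⨍ y in Ω, Real.sqrt (u3 y)) ^ 2)
            + (∫ x in Ω, (Real.sqrt (u4 x) - ⨍ y in Ω, Real.sqrt (u4 y)) ^ 2)
            + (volume Ω).toReal *
              ((Real.sqrt (⨍ x in Ω, u1 x) - Real.sqrt c1) ^ 2
                + (Real.sqrt (⨍ x in Ω, u2 x) - Real.sqrt c2) ^ 2
                + (Real.sqrt (⨍ x in Ω, u3 x) - Real.sqrt c3) ^ 2
                + (Real.sqrt (⨍ x in Ω, u4 x) - Real.sqrt c4) ^ 2)) :=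
  relative_entropy_upper_bound_general N Ω hΩ hΩfin c1 c2 c3 c4 hc1 hc2 hc3 hc4
end

section
/- Let kappa > 0, r in (0,1), let beta : [0,∞) → [0,∞) be continuous, and let y : [0,∞) → [0,∞) be differentiable with y'(t) <= beta(t) + kappa * y(t)^{1-r} for all t > 0. Then there exists a constant C > 0, depending only on kappa and r, such that y(t) <= C * ( y(0) + ∫_0^t beta(s) ds + t^{1/r} ) for all t > 0. -/
open MeasureTheory Set

/-! For `ε > 0` the function `u = (y + ε) ^ r` satisfies
`u' = r (y + ε) ^ (r - 1) y' ≤ r (ε ^ (r - 1) β + κ)`, because `y ^ (1 - r) (y + ε) ^ (r - 1) ≤ 1`: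
the substitution absorbs the sublinear term. Integrating over `[0, t]` and choosing
`ε = y 0 + ∫₀ᵗ β + t ^ (1 / r)` bounds every term of `u t` by a multiple of `ε ^ r`, so taking
`r`-th roots gives `y t ≤ C ε`. -/

section
variable {r κ : ℝ}

lemma mul_add_rpow_sub_one_le (hr : r ≤ 1) (hκ : 0 ≤ κ) {a b d ε : ℝ} (ha : 0 ≤ a)
    (hb : 0 ≤ b) (hε : 0 < ε) (hd : d ≤ b + κ * a ^ (1 - r)) :
    d * (a + ε) ^ (r - 1) ≤ ε ^ (r - 1) * b + κ := by
  have haε : 0 < a + ε := by linarith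
  have hpos : 0 < (a + ε) ^ (r - 1) := Real.rpow_pos_of_pos haε _
  have hmono : (a + ε) ^ (r - 1) ≤ ε ^ (r - 1) :=
    Real.rpow_le_rpow_of_nonpos hε (by linarith) (by linarith)
  have hsub : a ^ (1 - r) * (a + ε) ^ (r - 1) ≤ 1 := by
    calc a ^ (1 - r) * (a + ε) ^ (r - 1) ≤ (a + ε) ^ (1 - r) * (a + ε) ^ (r - 1) := by
          gcongr; linarith
      _ = 1 := by rw [← Real.rpow_add haε]; norm_num
  calc d * (a + ε) ^ (r - 1) ≤ (b + κ * a ^ (1 - r)) * (a + ε) ^ (r - 1) := by gcongr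
    _ = b * (a + ε) ^ (r - 1) + κ * (a ^ (1 - r) * (a + ε) ^ (r - 1)) := by ring
    _ ≤ ε ^ (r - 1) * b + κ := by
      rw [mul_comm b]
      gcongr
      exact mul_le_of_le_one_right hκ hsub

lemma add_rpow_sub_add_rpow_le (hr0 : 0 ≤ r) (hr1 : r ≤ 1) (hκ : 0 ≤ κ) {β y : ℝ → ℝ}
    {ε t : ℝ} (hε : 0 < ε) (ht : 0 ≤ t) (hβc : ContinuousOn β (Icc 0 t))
    (hβ : ∀ s ∈ Ioo 0 t, 0 ≤ β s) (hy : Differentiable ℝ y) (hy0 : ∀ s ∈ Icc 0 t, 0 ≤ y s)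
    (hyd : ∀ s ∈ Ioo 0 t, deriv y s ≤ β s + κ * y s ^ (1 - r)) :
    (y t + ε) ^ r - (y 0 + ε) ^ r ≤ r * (ε ^ (r - 1) * (∫ s in Ioc 0 t, β s) + κ * t) := by
  have hyε : ∀ s ∈ Icc 0 t, y s + ε ≠ 0 := fun s hs => by have := hy0 s hs; positivity
  have hderiv : ∀ s ∈ Icc 0 t,
      HasDerivAt (fun x => (y x + ε) ^ r) (deriv y s * r * (y s + ε) ^ (r - 1)) s :=
    fun s hs => ((hy s).hasDerivAt.add_const ε).rpow_const (Or.inl (hyε s hs))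
  have hint : IntegrableOn (fun s => r * (ε ^ (r - 1) * β s + κ)) (Icc 0 t) :=
    (continuousOn_const.mul ((continuousOn_const.mul hβc).add continuousOn_const)).integrableOn_Icc
  have hmain := intervalIntegral.sub_le_integral_of_hasDeriv_right_of_le ht
    (fun s hs => (hderiv s hs).continuousAt.continuousWithinAt)
    (fun s hs => (hderiv s (Ioo_subset_Icc_self hs)).hasDerivWithinAt) hint
    (fun s hs => by
      rw [mul_right_comm, mul_comm]
      exact mul_le_mul_of_nonneg_left (mul_add_rpow_sub_one_le hr1 hκ
        (hy0 s (Ioo_subset_Icc_self hs)) (hβ s hs) hε (hyd s hs)) hr0)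
  have hβint : IntervalIntegrable β volume 0 t :=
    (hβc.mono (uIcc_of_le ht).subset).intervalIntegrable
  rwa [intervalIntegral.integral_const_mul, intervalIntegral.integral_add
    (hβint.const_mul _) intervalIntegrable_const, intervalIntegral.integral_const_mul,
    intervalIntegral.integral_of_le ht, intervalIntegral.integral_const, sub_zero,
    smul_eq_mul, mul_comm t] at hmain

end

lemma le_rpow_one_div_mul_of_rpow_le {x K ε r : ℝ} (hr : 0 < r) (hx : 0 ≤ x) (hK : 0 ≤ K)
    (hε : 0 ≤ ε) (h : x ^ r ≤ K * ε ^ r) : x ≤ K ^ (1 / r) * ε := by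
  have hpow : (K ^ (1 / r) * ε) ^ r = K * ε ^ r := by
    rw [Real.mul_rpow (by positivity) hε, one_div, Real.rpow_inv_rpow hK hr.ne']
  rwa [← hpow, Real.rpow_le_rpow_iff hx (by positivity) hr] at h

/-- Gronwall-type inequality with a sublinear nonlinearity: if
`y' ≤ β(t) + κ y^(1-r)` on `(0,∞)`, then `y(t) ≤ C (y(0) + ∫₀ᵗ β + t^(1/r))`,
where `C` depends only on `κ` and `r`. -/
theorem gronwall_type_sublinear (κ r : ℝ) (hκ : 0 < κ) (hr0 : 0 < r) (hr1 : r < 1) :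
    ∃ C : ℝ, 0 < C ∧
      ∀ β y : ℝ → ℝ,
        ContinuousOn β (Ici (0 : ℝ)) → (∀ t ≥ (0 : ℝ), 0 ≤ β t) →
        Differentiable ℝ y → (∀ t ≥ (0 : ℝ), 0 ≤ y t) →
        (∀ t > (0 : ℝ), deriv y t ≤ β t + κ * y t ^ (1 - r)) →
        ∀ t > (0 : ℝ),
          y t ≤ C * (y 0 + (∫ s in Ioc (0 : ℝ) t, β s) + t ^ (1 / r)) := by
  refine ⟨(2 ^ r + r + r * κ) ^ (1 / r), by positivity, ?_⟩
  intro β y hβc hβ0 hy hy0 hyd t ht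
  set F := ∫ s in Ioc (0 : ℝ) t, β s
  have hF : 0 ≤ F := setIntegral_nonneg measurableSet_Ioc fun s hs => hβ0 s hs.1.le
  have hy00 := hy0 0 le_rfl
  set ε := y 0 + F + t ^ (1 / r)
  have hε : 0 < ε := by positivity
  have hinit : (y 0 + ε) ^ r ≤ 2 ^ r * ε ^ r := by
    rw [← Real.mul_rpow zero_le_two hε.le]
    gcongr
    linarith [Real.rpow_nonneg ht.le (1 / r)]
  have hsource : ε ^ (r - 1) * F ≤ ε ^ r := by
    calc ε ^ (r - 1) * F ≤ ε ^ (r - 1) * ε := by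
          gcongr; linarith [Real.rpow_nonneg ht.le (1 / r)]
      _ = ε ^ r := by rw [Real.rpow_sub_one hε.ne', div_mul_cancel₀ _ hε.ne']
  have htime : t ≤ ε ^ r := by
    calc t = (t ^ (1 / r)) ^ r := by rw [one_div, Real.rpow_inv_rpow ht.le hr0.ne']
      _ ≤ ε ^ r := by gcongr; linarith
  have hint := add_rpow_sub_add_rpow_le hr0.le hr1.le hκ.le hε ht.le
    (hβc.mono Icc_subset_Ici_self) (fun s hs => hβ0 s hs.1.le) hy
    (fun s hs => hy0 s hs.1) (fun s hs => hyd s hs.1)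
  have hbound : (y t + ε) ^ r ≤ (2 ^ r + r + r * κ) * ε ^ r := by
    have := mul_le_mul_of_nonneg_left htime (mul_nonneg hr0.le hκ.le)
    have := mul_le_mul_of_nonneg_left hsource hr0.le
    linarith
  calc y t ≤ y t + ε := by linarith
    _ ≤ (2 ^ r + r + r * κ) ^ (1 / r) * ε :=
      le_rpow_one_div_mul_of_rpow_le hr0 (by linarith [hy0 t ht.le]) (by positivity) hε.le hbound
end

section
/- Let c > 0 be a real number and let p : N → R be a sequence with c/2 < p_0 < c and such that p_{n+1} = c * p_n / (2 * (c - p_n)) whenever p_n < c. Then there exists n in N with p_n >= c. -/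
/-!
While `p n < c`, the distance `p n - c/2` to the repelling fixed point `c/2` at least doubles
at each step, so it would tend to infinity; hence `p n < c` cannot hold for every `n`.
-/

open Filter

/-- The right side minus the left side is `2 (x - c/2)² / (c - x)`. -/
lemma two_mul_sub_half_le_bootstrap_sub_half {c x : ℝ} (hx : x < c) :
    2 * (x - c / 2) ≤ c * x / (2 * (c - x)) - c / 2 := by
  have hgap : 0 < 2 * (c - x) := by linarith
  rw [div_sub' hgap.ne', le_div_iff₀ hgap]
  nlinarith [sq_nonneg (2 * x - c)]

theorem bootstrap_exponents_reach_c_general (c : ℝ) (p : ℕ → ℝ)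
    (h0 : c / 2 < p 0)
    (hrec : ∀ n : ℕ, p n < c → p (n + 1) = c * p n / (2 * (c - p n))) :
    ∃ n : ℕ, c ≤ p n := by
  by_contra! hlt
  have hdouble : ∀ n, 2 * (p n - c / 2) ≤ p (n + 1) - c / 2 := fun n ↦ by
    rw [hrec n (hlt n)]
    exact two_mul_sub_half_le_bootstrap_sub_half (hlt n)
  have hdiverge : Tendsto (fun n ↦ p n - c / 2) atTop atTop :=
    tendsto_atTop_of_geom_le (sub_pos.mpr h0) one_lt_two hdouble
  obtain ⟨n, hn⟩ := (hdiverge.eventually_ge_atTop (c / 2)).exists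
  linarith [hlt n]

/-- Bootstrap exponent recursion: if `c/2 < p 0 < c` and
`p (n+1) = c * p n / (2 * (c - p n))` whenever `p n < c`, then the sequence
reaches or exceeds `c` after finitely many steps. -/
theorem bootstrap_exponents_reach_c (c : ℝ) (hc : 0 < c) (p : ℕ → ℝ)
    (h0 : c / 2 < p 0) (h0' : p 0 < c)
    (hrec : ∀ n : ℕ, p n < c → p (n + 1) = c * p n / (2 * (c - p n))) :
    ∃ n : ℕ, c ≤ p n :=
  bootstrap_exponents_reach_c_general c p h0 hrec
end
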